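/- arXiv:1405.1241 — 7 statements merged into one kernel-verified Lean document; each statement's English description precedes it below -/
import Mathlib

section
/- Let N ≥ 2, f ∈ C¹(ℝ), and u a nonconstant semi-stable radial solution of -Δu = f(u) on the punctured closed unit ball of ℝ^N. Then the radial derivative u_r vanishes at most at one point of (0,1). -/
/-!
Testing semi-stability with `η ≡ 1` between two zeros `r₁ < r₂` of `u_r` (admissible precisely
because `u_r` vanishes at both ends) gives `-(N - 1) ∫ r^(N-3) u_r² ≥ 0`, so `u_r ≡ 0` on
`[r₁, r₂]`. There `u` is a constant `c` with `f c = 0`, i.e. `u` meets the equilibrium `c` with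
zero velocity; uniqueness for the radial ODE, which is regular away from `r = 0`, forces `u ≡ c`
on `(0, 1)`, and continuity extends this to `r = 1`.
-/

open Set intervalIntegral MeasureTheory NNReal

/-- The radial form of semi-stability on the unit ball of `ℝ^N`, with `k = N - 1`. -/
def IsRadiallySemistable (k : ℝ) (u : ℝ → ℝ) : Prop :=
  ∀ r₁ r₂ : ℝ, 0 < r₁ → r₁ < r₂ → r₂ < 1 → ∀ η : ℝ → ℝ,
    (∃ C, LipschitzOnWith C η (Icc r₁ r₂)) →
    η r₁ * deriv u r₁ = 0 → η r₂ * deriv u r₂ = 0 →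
    0 ≤ ∫ r in r₁..r₂, r ^ k * (deriv u r) ^ 2 * ((deriv η r) ^ 2 - k / r ^ 2 * (η r) ^ 2)

theorem ContinuousOn.eqOn_zero_of_integral_nonpos {g : ℝ → ℝ} {a b : ℝ} (hab : a < b)
    (hg : ContinuousOn g (Icc a b)) (hg₀ : ∀ x ∈ Icc a b, 0 ≤ g x)
    (hint : ∫ x in a..b, g x ≤ 0) : EqOn g 0 (Icc a b) := by
  have hzero : ∫ x in a..b, g x = 0 := le_antisymm hint (integral_nonneg hab.le hg₀)
  have hae : g =ᵐ[volume.restrict (Ioc a b)] 0 := by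
    refine (integral_eq_zero_iff_of_le_of_nonneg_ae hab.le ?_
      (hg.intervalIntegrable_of_Icc hab.le)).mp hzero
    filter_upwards [ae_restrict_mem measurableSet_Ioc] with x hx
    exact hg₀ x (Ioc_subset_Icc_self hx)
  rw [Measure.restrict_congr_set Ioc_ae_eq_Icc] at hae
  refine Measure.eqOn_of_ae_eq hae hg continuousOn_const ?_
  rw [interior_Icc, closure_Ioo hab.ne]

theorem IsRadiallySemistable.deriv_eqOn_zero {k : ℝ} {u : ℝ → ℝ}
    (hstab : IsRadiallySemistable k u) (hk : 0 < k) {r₁ r₂ : ℝ} (h₁ : 0 < r₁) (h₁₂ : r₁ < r₂)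
    (h₂ : r₂ < 1) (hu' : ContinuousOn (deriv u) (Icc r₁ r₂)) (hd₁ : deriv u r₁ = 0)
    (hd₂ : deriv u r₂ = 0) : EqOn (deriv u) 0 (Icc r₁ r₂) := by
  have hweight : ∀ r ∈ Icc r₁ r₂, 0 < k / r ^ 2 * r ^ k := fun r hr ↦ by
    have : 0 < r := h₁.trans_le hr.1
    positivity
  have hint : ∫ r in r₁..r₂, k / r ^ 2 * r ^ k * deriv u r ^ 2 ≤ 0 := by
    have h := hstab r₁ r₂ h₁ h₁₂ h₂ (fun _ ↦ 1) ⟨0, (LipschitzWith.const 1).lipschitzOnWith⟩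
      (by simp [hd₁]) (by simp [hd₂])
    rw [← neg_nonneg, ← intervalIntegral.integral_neg]
    refine h.trans_eq (integral_congr fun r _ ↦ ?_)
    simp only [deriv_const']
    ring
  have hcont : ContinuousOn (fun r ↦ k / r ^ 2 * r ^ k * deriv u r ^ 2) (Icc r₁ r₂) := by
    refine ContinuousOn.mul (ContinuousOn.mul ?_ ?_) (hu'.pow 2)
    · exact continuousOn_const.div (continuousOn_pow 2)
        fun r hr ↦ (pow_pos (h₁.trans_le hr.1) 2).ne'
    · exact continuousOn_id.rpow_const fun r hr ↦ Or.inl (h₁.trans_le hr.1).ne'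
  have hzero := hcont.eqOn_zero_of_integral_nonpos h₁₂
    (fun r hr ↦ (mul_nonneg (hweight r hr).le (sq_nonneg _))) hint
  intro r hr
  exact pow_eq_zero_iff two_ne_zero |>.mp <|
    (mul_eq_zero.mp (hzero hr)).resolve_left (hweight r hr).ne'

theorem ContDiffOn.hasDerivAt_deriv_of_radial_eq {k : ℝ} {f u : ℝ → ℝ} {s : Set ℝ}
    (hu : ContDiffOn ℝ 2 u s) (hs : IsOpen s)
    (heq : ∀ r ∈ s, -(deriv (deriv u) r) - k / r * deriv u r = f (u r)) {t : ℝ} (ht : t ∈ s) :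
    HasDerivAt u (deriv u t) t ∧ HasDerivAt (deriv u) (-(k / t) * deriv u t - f (u t)) t := by
  refine ⟨((hu.differentiableOn two_ne_zero).differentiableAt (hs.mem_nhds ht)).hasDerivAt, ?_⟩
  refine ((((hu.deriv_of_isOpen hs (by norm_num)).differentiableOn one_ne_zero).differentiableAt
    (hs.mem_nhds ht)).hasDerivAt).congr_deriv ?_
  linarith [heq t ht]

theorem LipschitzOnWith.phasePlaneField {f : ℝ → ℝ} {S : Set ℝ} {L : ℝ≥0}
    (hf : LipschitzOnWith L f S) (c : ℝ) :
    LipschitzOnWith (max 1 (‖c‖₊ + L)) (fun p : ℝ × ℝ ↦ (p.2, c * p.2 - f p.1)) (S ×ˢ univ) := by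
  refine LipschitzWith.prod_snd.lipschitzOnWith.prodMk (LipschitzOnWith.sub ?_ ?_)
  · have h := (lipschitzWith_smul c).comp (LipschitzWith.prod_snd (α := ℝ) (β := ℝ))
    rw [mul_one] at h
    exact h.lipschitzOnWith
  · have h := hf.comp (LipschitzWith.prod_fst (β := ℝ)).lipschitzOnWith (s := S ×ˢ univ)
      fun _ hp ↦ hp.1
    rw [mul_one] at h
    exact h

theorem radial_ODE_solution_unique {k : ℝ} {f : ℝ → ℝ} (hf : LocallyLipschitz f)
    {u u' w w' : ℝ → ℝ} {a b t₀ : ℝ} (ha : 0 ≤ a) (ht₀ : t₀ ∈ Ioo a b)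
    (hu : ∀ t ∈ Ioo a b, HasDerivAt u (u' t) t ∧ HasDerivAt u' (-(k / t) * u' t - f (u t)) t)
    (hw : ∀ t ∈ Ioo a b, HasDerivAt w (w' t) t ∧ HasDerivAt w' (-(k / t) * w' t - f (w t)) t)
    (h₀ : u t₀ = w t₀) (h₀' : u' t₀ = w' t₀) : EqOn u w (Ioo a b) := by
  intro t ht
  -- Gronwall needs a uniform Lipschitz constant: on `[a', b'] ⊂ (0, ∞)` the coefficient `k / s`
  -- is bounded, and `f` is Lipschitz on the compact range of `u` and `w`.
  obtain ⟨a', haa', ha't⟩ := exists_between (lt_min ht.1 ht₀.1)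
  obtain ⟨b', htb', hb'b⟩ := exists_between (max_lt ht.2 ht₀.2)
  have ha' : 0 < a' := ha.trans_lt haa'
  have hsub : Icc a' b' ⊆ Ioo a b := Icc_subset_Ioo haa' hb'b
  have hsub' : Ioo a' b' ⊆ Ioo a b := Ioo_subset_Icc_self.trans hsub
  set S := u '' Icc a' b' ∪ w '' Icc a' b'
  have hS : IsCompact S :=
    (isCompact_Icc.image_of_continuousOn
      (HasDerivAt.continuousOn fun s hs ↦ (hu s (hsub hs)).1)).union
    (isCompact_Icc.image_of_continuousOn
      (HasDerivAt.continuousOn fun s hs ↦ (hw s (hsub hs)).1))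
  obtain ⟨L, hL⟩ := hf.locallyLipschitzOn.exists_lipschitzOnWith_of_compact hS
  have hv : ∀ s ∈ Ioo a' b', LipschitzOnWith (max 1 ((|k| / a').toNNReal + L))
      (fun p : ℝ × ℝ ↦ (p.2, -(k / s) * p.2 - f p.1)) (S ×ˢ univ) := by
    intro s hs
    refine (hL.phasePlaneField _).weaken (max_le_max le_rfl (add_le_add_left ?_ _))
    rw [← NNReal.coe_le_coe, coe_nnnorm, Real.coe_toNNReal _ (by positivity), norm_neg,
      Real.norm_eq_abs, abs_div, abs_of_pos (ha'.trans hs.1)]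
    exact div_le_div_of_nonneg_left (abs_nonneg k) ha' hs.1.le
  have hphase := ODE_solution_unique_of_mem_Ioo
    (f := fun s ↦ (u s, u' s)) (g := fun s ↦ (w s, w' s)) hv
    ⟨ha't.trans_le (min_le_right _ _), (le_max_right _ _).trans_lt htb'⟩
    (fun s hs ↦ ⟨(hu s (hsub' hs)).1.prodMk (hu s (hsub' hs)).2,
      Or.inl (mem_image_of_mem u (Ioo_subset_Icc_self hs)), mem_univ _⟩)
    (fun s hs ↦ ⟨(hw s (hsub' hs)).1.prodMk (hw s (hsub' hs)).2,
      Or.inr (mem_image_of_mem w (Ioo_subset_Icc_self hs)), mem_univ _⟩)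
    (Prod.ext h₀ h₀') ⟨ha't.trans_le (min_le_left _ _), (le_max_left _ _).trans_lt htb'⟩
  exact congrArg Prod.fst hphase

theorem stmt_4 (N : ℕ) (hN : 2 ≤ N) (f : ℝ → ℝ) (hf : ContDiff ℝ 1 f)
    (u : ℝ → ℝ) (hu : ContDiffOn ℝ 2 u (Ioc (0 : ℝ) 1))
    (heq : ∀ r ∈ Ioc (0 : ℝ) 1,
      -(deriv (deriv u) r) - ((N : ℝ) - 1) / r * deriv u r = f (u r))
    (hstab : ∀ r₁ r₂ : ℝ, 0 < r₁ → r₁ < r₂ → r₂ < 1 → ∀ η : ℝ → ℝ,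
      (∃ C, LipschitzOnWith C η (Icc r₁ r₂)) →
      η r₁ * deriv u r₁ = 0 → η r₂ * deriv u r₂ = 0 →
      0 ≤ ∫ r in r₁..r₂,
        r ^ ((N : ℝ) - 1) * (deriv u r) ^ 2 *
          ((deriv η r) ^ 2 - ((N : ℝ) - 1) / r ^ 2 * (η r) ^ 2))
    (hnc : ¬ ∃ c : ℝ, ∀ r ∈ Ioc (0 : ℝ) 1, u r = c) :
    ∀ r₁ ∈ Ioo (0 : ℝ) 1, ∀ r₂ ∈ Ioo (0 : ℝ) 1,
      deriv u r₁ = 0 → deriv u r₂ = 0 → r₁ = r₂ := by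
  intro r₁ h₁ r₂ h₂ hd₁ hd₂
  by_contra hne
  wlog h₁₂ : r₁ < r₂ generalizing r₁ r₂
  · exact this r₂ h₂ r₁ h₁ hd₂ hd₁ (Ne.symm hne) ((not_lt.1 h₁₂).lt_of_ne (Ne.symm hne))
  have hk : 0 < (N : ℝ) - 1 := sub_pos.2 (by exact_mod_cast hN)
  have hode : ∀ t ∈ Ioo (0 : ℝ) 1, HasDerivAt u (deriv u t) t ∧
      HasDerivAt (deriv u) (-(((N : ℝ) - 1) / t) * deriv u t - f (u t)) t :=
    fun t ↦ (hu.mono Ioo_subset_Ioc_self).hasDerivAt_deriv_of_radial_eq isOpen_Ioo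
      fun r hr ↦ heq r (Ioo_subset_Ioc_self hr)
  have hIcc : Icc r₁ r₂ ⊆ Ioo 0 1 := Icc_subset_Ioo h₁.1 h₂.2
  have hflat : EqOn (deriv u) 0 (Icc r₁ r₂) :=
    IsRadiallySemistable.deriv_eqOn_zero (k := (N : ℝ) - 1) hstab hk h₁.1 h₁₂ h₂.2
      (HasDerivAt.continuousOn fun t ht ↦ (hode t (hIcc ht)).2) hd₁ hd₂
  obtain ⟨t₀, ht₀⟩ := exists_between h₁₂
  have ht₀' : t₀ ∈ Icc r₁ r₂ := Ioo_subset_Icc_self ht₀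
  have hequilibrium : f (u t₀) = 0 := by
    have hflat' : deriv u =ᶠ[nhds t₀] fun _ ↦ 0 :=
      Filter.eventually_of_mem (Ioo_mem_nhds ht₀.1 ht₀.2) fun t ht ↦ hflat (Ioo_subset_Icc_self ht)
    have h := (hode t₀ (hIcc ht₀')).2.unique ((hasDerivAt_const t₀ 0).congr_of_eventuallyEq hflat')
    simpa [hflat ht₀'] using h
  have hconst : EqOn u (fun _ ↦ u t₀) (Ioo 0 1) :=
    radial_ODE_solution_unique (w' := fun _ ↦ 0) hf.locallyLipschitz le_rfl (hIcc ht₀') hode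
      (fun t _ ↦ ⟨hasDerivAt_const t _, by simpa [hequilibrium] using hasDerivAt_const t 0⟩)
      rfl (hflat ht₀')
  exact hnc ⟨u t₀, hconst.of_subset_closure hu.continuousOn continuousOn_const
    Ioo_subset_Ioc_self (by rw [closure_Ioo zero_ne_one]; exact Ioc_subset_Icc_self)⟩
end

section
/- Let N ≥ 2 and let g : (0,1] → ℝ be continuous with ∫₀^{1/4} r^{N-3} g(r)² dr = +∞. Then there exists a ∈ (0, 1/4) such that, with η₀(r) = 1 for a ≤ r < 1/4 and η₀(r) = 2 - 4r for 1/4 ≤ r ≤ 1/2, one has η₀(a) = 1, η₀(1/2) = 0, and ∫_a^{1/2} r^{N-1} g(r)² ( η₀'(r)² - (N-1)/r² · η₀(r)² ) dr < 0. -/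
/-!
On `(a, 1/4)` the cutoff is constant, so there the integrand is `-(N-1) r^(N-3) g(r)²`; since
`r^(N-3) g²` is nonnegative and not integrable at `0`, its integral over `(a, 1/4)` is unbounded
as `a → 0`, while the contribution of `[1/4, 1/2]` does not depend on `a`.
-/

open Set MeasureTheory intervalIntegral Filter Topology

theorem exists_lt_intervalIntegral_of_not_integrableOn_Ioc {f : ℝ → ℝ} {a b : ℝ}
    (hloc : ∀ c ∈ Ioo a b, IntegrableOn f (Ioc c b)) (hf : ∀ x ∈ Ioc a b, 0 ≤ f x)
    (hint : ¬ IntegrableOn f (Ioc a b)) (C : ℝ) :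
    ∃ c ∈ Ioo a b, C < ∫ x in c..b, f x := by
  have hab : 0 < b - a := by
    by_contra! hba
    exact hint (by simp [Ioc_eq_empty_of_le (sub_nonpos.1 hba)])
  by_contra! hbound
  have hc : ∀ n : ℕ, a + (b - a) / (n + 2) ∈ Ioo a b := fun n => by
    have hstep : (b - a) / (n + 2) < b - a :=
      div_lt_self hab (by linarith [n.cast_nonneg (α := ℝ)])
    exact ⟨by simp only [lt_add_iff_pos_right]; positivity, by linarith⟩
  have hc_tendsto : Tendsto (fun n : ℕ => a + (b - a) / (n + 2)) atTop (𝓝 a) := by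
    simpa using tendsto_const_nhds.add
      ((tendsto_const_div_atTop_nhds_zero_nat (b - a)).comp (tendsto_add_atTop_nat 2))
  refine hint (integrableOn_Ioc_of_intervalIntegral_norm_bounded_left (I := C)
    (fun n => hloc _ (hc n)) hc_tendsto (Eventually.of_forall fun n => ?_))
  rw [← integral_of_le (hc n).2.le]
  calc ∫ x in _..b, ‖f x‖ = ∫ x in _..b, f x :=
        integral_congr_Ioo_of_le (hc n).2.le fun x hx =>
          Real.norm_of_nonneg (hf x ⟨(hc n).1.trans hx.1, hx.2.le⟩)
    _ ≤ C := hbound _ (hc n)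

theorem integral_eq_add_of_eqOn_uIoo {E : Type*} [NormedAddCommGroup E] [NormedSpace ℝ E]
    {μ : Measure ℝ} [NullSingletonClass μ] {f f₁ f₂ : ℝ → E} {a b c : ℝ}
    (h₁ : EqOn f f₁ (uIoo a b)) (h₂ : EqOn f f₂ (uIoo b c))
    (hf₁ : IntervalIntegrable f₁ μ a b) (hf₂ : IntervalIntegrable f₂ μ b c) :
    ∫ x in a..c, f x ∂μ = (∫ x in a..b, f₁ x ∂μ) + ∫ x in b..c, f₂ x ∂μ := by
  rw [← integral_congr_uIoo h₁, ← integral_congr_uIoo h₂, integral_add_adjacent_intervals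
    (hf₁.congr_uIoo h₁.symm) (hf₂.congr_uIoo h₂.symm)]

section Piecewise

variable {E : Type*} [NormedAddCommGroup E] [NormedSpace ℝ E] {u v : ℝ → E} {c x : ℝ}

theorem deriv_ite_lt_of_lt (hx : x < c) :
    deriv (fun r => if r < c then u r else v r) x = deriv u x :=
  EventuallyEq.deriv_eq (by filter_upwards [Iio_mem_nhds hx] with r hr using if_pos hr)

theorem deriv_ite_lt_of_gt (hx : c < x) :
    deriv (fun r => if r < c then u r else v r) x = deriv v x :=
  EventuallyEq.deriv_eq (by filter_upwards [Ioi_mem_nhds hx] with r hr using if_neg hr.not_gt)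

end Piecewise

theorem stmt_5 (N : ℕ) (hN : 2 ≤ N) (g : ℝ → ℝ)
    (hg : ContinuousOn g (Ioc (0 : ℝ) 1))
    (hdiv : ¬ IntegrableOn (fun r : ℝ => r ^ ((N : ℝ) - 3) * (g r) ^ 2)
      (Ioc (0 : ℝ) (1 / 4)))
    (η₀ : ℝ → ℝ)
    (hη₀ : η₀ = fun r : ℝ => if r < 1 / 4 then 1 else 2 - 4 * r) :
    ∃ a ∈ Ioo (0 : ℝ) (1 / 4),
      η₀ a = 1 ∧ η₀ (1 / 2) = 0 ∧
      (∫ r in a..(1 / 2 : ℝ),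
        r ^ ((N : ℝ) - 1) * (g r) ^ 2 *
          ((deriv η₀ r) ^ 2 - ((N : ℝ) - 1) / r ^ 2 * (η₀ r) ^ 2)) < 0 := by
  subst hη₀
  have hN1 : (0 : ℝ) < N - 1 := by
    have : (2 : ℝ) ≤ N := mod_cast hN
    linarith
  set f : ℝ → ℝ := fun r => r ^ ((N : ℝ) - 3) * g r ^ 2
  set F : ℝ → ℝ := fun r =>
    r ^ ((N : ℝ) - 1) * g r ^ 2 * (16 - ((N : ℝ) - 1) / r ^ 2 * (2 - 4 * r) ^ 2)
  have hf : ContinuousOn f (Ioc 0 1) := by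
    fun_prop (disch := intro x (hx : x ∈ Ioc 0 1); have := hx.1; positivity)
  have hF : ContinuousOn F (Ioc 0 1) := by
    fun_prop (disch := intro x (hx : x ∈ Ioc 0 1); have := hx.1; positivity)
  have hsub : ∀ {c d : ℝ}, 0 < c → c ≤ d → d ≤ 1 → Icc c d ⊆ Ioc 0 1 := fun hc hcd hd =>
    (Icc_subset_Ioc_iff hcd).2 ⟨hc, hd⟩
  obtain ⟨a, ha, hlt⟩ := exists_lt_intervalIntegral_of_not_integrableOn_Ioc
    (fun c hc => ((hf.mono (hsub hc.1 hc.2.le (by norm_num))).integrableOn_Icc).mono_set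
      Ioc_subset_Icc_self)
    (fun x hx => by have := hx.1; positivity) hdiv
    ((∫ r in (1 / 4 : ℝ)..1 / 2, F r) / (N - 1))
  refine ⟨a, ha, if_pos ha.2, by norm_num, ?_⟩
  rw [integral_eq_add_of_eqOn_uIoo (b := 1 / 4) (f₁ := fun r => -((N : ℝ) - 1) * f r) (f₂ := F)
    _ _ _ _, intervalIntegral.integral_const_mul]
  · rw [div_lt_iff₀ hN1] at hlt
    linarith
  · rw [uIoo_of_le ha.2.le]
    intro x hx
    have hx0 : 0 < x := ha.1.trans hx.1
    simp only [deriv_ite_lt_of_lt hx.2, if_pos hx.2, f]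
    rw [deriv_const, show (N : ℝ) - 1 = (N - 3) + 2 by ring, Real.rpow_add hx0, Real.rpow_two]
    field_simp
    ring
  · rw [uIoo_of_le (by norm_num)]
    intro x hx
    simp only [deriv_ite_lt_of_gt hx.1, if_neg hx.1.not_gt, F]
    norm_num
  · exact ((hf.mono (hsub ha.1 ha.2.le (by norm_num))).intervalIntegrable_of_Icc
      ha.2.le).const_mul _
  · exact (hF.mono (hsub (by norm_num) (by norm_num) (by norm_num))).intervalIntegrable_of_Icc
      (by norm_num)
end

section
/- Let N ≥ 2, f ∈ C¹(ℝ), and u ∉ H¹(B₁) a semi-stable radial solution of -Δu = f(u) on the punctured closed unit ball of ℝ^N. Then there exist constants K > 0 and r₀ ∈ (0,1) such that for all r ∈ (0, r₀): ∫_{r/2}^{r} ds / u_r(s)² ≤ K · r^{N + 2√(N-1) - 1}. -/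
open Set MeasureTheory intervalIntegral Filter Topology

/-!
Write `w(t) = t^(N-1) u'(t)^2` and `a = √(N-1)`, so that semi-stability reads
`∫ w (η'² - a² η² / t²) ≥ 0`. Testing with `η = 1` between two zeros of `u'` forces `w = 0` in
between; since `w` is not integrable at `0`, `u'` has no zeros near `0`.

Near `0` we test with the function that rises from `0` to `(σ/ρ)^a` on `[σ', σ]` as the normalised
primitive of `1/w` (the capacity potential, of energy `(σ/ρ)^(2a) / ∫_{σ'}^{σ} 1/w`), follows the
Hardy extremal `(t/ρ)^a` up to `ρ` (where the integrand vanishes identically), equals `1` up to `ρ₀`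
and is cut off linearly on `[ρ₀, 2ρ₀]`. If for every `ρ` one could find `σ' < σ < ρ` with
`∫_{σ'}^{σ} 1/w > (σ/ρ)^(2a)`, this would bound `∫_ρ^{ρ₀} w / t²` uniformly in `ρ` and make `w`
integrable at `0`. Hence `∫_{σ'}^{σ} 1/w ≤ (σ/ρ)^(2a)` for some `ρ` and all `σ' < σ < ρ`, and
`1/u'² = t^(N-1) / w` turns this into the claim.
-/

lemma LipschitzOnWith.Icc_union {f : ℝ → ℝ} {K : NNReal} {a b c : ℝ}
    (h₁ : LipschitzOnWith K f (Icc a b)) (h₂ : LipschitzOnWith K f (Icc b c)) :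
    LipschitzOnWith K f (Icc a c) := by
  have key : ∀ x ∈ Icc a c, ∀ y ∈ Icc a c, x ≤ y → dist (f x) (f y) ≤ K * dist x y := by
    intro x hx y hy hxy
    rcases le_total y b with hyb | hby
    · exact h₁.dist_le_mul x ⟨hx.1, hxy.trans hyb⟩ y ⟨hy.1, hyb⟩
    rcases le_total b x with hbx | hxb
    · exact h₂.dist_le_mul x ⟨hbx, hx.2⟩ y ⟨hbx.trans hxy, hy.2⟩
    calc dist (f x) (f y) ≤ dist (f x) (f b) + dist (f b) (f y) := dist_triangle _ _ _
      _ ≤ K * dist x b + K * dist b y :=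
        add_le_add (h₁.dist_le_mul x ⟨hx.1, hxb⟩ b ⟨hx.1.trans hxb, le_rfl⟩)
          (h₂.dist_le_mul b ⟨le_rfl, hby.trans hy.2⟩ y ⟨hby, hy.2⟩)
      _ = K * dist x y := by
        rw [Real.dist_eq, Real.dist_eq, Real.dist_eq, abs_of_nonpos (by linarith),
          abs_of_nonpos (by linarith), abs_of_nonpos (by linarith)]
        ring
  refine LipschitzOnWith.of_dist_le_mul fun x hx y hy => ?_
  rcases le_total x y with hxy | hyx
  · exact key x hx y hy hxy
  · rw [dist_comm, dist_comm x]
    exact key y hy x hx hyx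

lemma exists_lipschitzOnWith_Icc_union {f : ℝ → ℝ} {a b c : ℝ}
    (h₁ : ∃ K, LipschitzOnWith K f (Icc a b)) (h₂ : ∃ K, LipschitzOnWith K f (Icc b c)) :
    ∃ K, LipschitzOnWith K f (Icc a c) := by
  obtain ⟨K₁, h₁⟩ := h₁
  obtain ⟨K₂, h₂⟩ := h₂
  exact ⟨max K₁ K₂, (h₁.weaken (le_max_left _ _)).Icc_union (h₂.weaken (le_max_right _ _))⟩

lemma exists_lipschitzOnWith_of_hasDerivAt {f f' : ℝ → ℝ} {a b : ℝ}
    (hf : ∀ x ∈ Icc a b, HasDerivAt f (f' x) x) (hf' : ContinuousOn f' (Icc a b)) :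
    ∃ K, LipschitzOnWith K f (Icc a b) := by
  obtain ⟨C, hC⟩ := isCompact_Icc.exists_bound_of_continuousOn hf'
  refine ⟨C.toNNReal, (convex_Icc a b).lipschitzOnWith_of_nnnorm_hasDerivWithin_le
    (fun x hx => (hf x hx).hasDerivWithinAt) fun x hx => ?_⟩
  rw [← NNReal.coe_le_coe, coe_nnnorm]
  exact (hC x hx).trans (Real.le_coe_toNNReal C)

lemma integrableOn_Ioc_of_forall_integral_le {f : ℝ → ℝ} {a b I : ℝ}
    (hf : ContinuousOn f (Ioc a b)) (hnonneg : ∀ t ∈ Ioc a b, 0 ≤ f t)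
    (hle : ∀ x ∈ Ioo a b, ∫ t in x..b, f t ≤ I) : IntegrableOn f (Ioc a b) := by
  rcases le_or_gt b a with hba | hab
  · simp [Ioc_eq_empty_of_le hba]
  set x : ℕ → ℝ := fun n => a + (b - a) / (n + 2)
  have hx : ∀ n : ℕ, x n ∈ Ioo a b := fun n => by
    have hpos : 0 < (b - a) / (n + 2) := by positivity
    have hlt : (b - a) / (n + 2) < b - a :=
      div_lt_self (by linarith) (by linarith [n.cast_nonneg (α := ℝ)])
    constructor <;> simp only [x] <;> linarith
  refine integrableOn_Ioc_of_intervalIntegral_norm_bounded_left (a := x) (l := atTop) (I := I)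
    (fun n => ?_) ?_ (Eventually.of_forall fun n => ?_)
  · exact ((hf.mono (Icc_subset_Ioc (hx n).1 le_rfl)).integrableOn_compact isCompact_Icc).mono_set
      Ioc_subset_Icc_self
  · have := (tendsto_const_div_atTop_nhds_zero_nat (b - a)).comp (tendsto_add_atTop_nat 2)
    simpa [x, Function.comp_def] using this.const_add a
  · rw [← integral_of_le (hx n).2.le]
    refine le_trans (le_of_eq ?_) (hle _ (hx n))
    refine integral_congr fun t ht => ?_
    rw [uIcc_of_le (hx n).2.le] at ht
    exact Real.norm_of_nonneg (hnonneg t ⟨(hx n).1.trans_le ht.1, ht.2⟩)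

lemma hasDerivAt_div_rpow {a ρ t : ℝ} (hρ : 0 < ρ) (ht : 0 < t) :
    HasDerivAt (fun t => (t / ρ) ^ a) (a * (t / ρ) ^ a / t) t := by
  have htρ : 0 < t / ρ := div_pos ht hρ
  have := (Real.hasDerivAt_rpow_const (p := a) (Or.inl htρ.ne')).comp t
    ((hasDerivAt_id t).div_const ρ)
  refine this.congr_deriv ?_
  rw [Real.rpow_sub_one htρ.ne']
  field_simp

lemma hasDerivAt_integral_one_div {w : ℝ → ℝ} {β x t : ℝ} (hw : ContinuousOn w (Ioo 0 β))
    (hpos : ∀ s ∈ Ioo 0 β, 0 < w s) (hx : x ∈ Ioo 0 β) (ht : t ∈ Ioo 0 β) :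
    HasDerivAt (fun t => ∫ s in x..t, 1 / w s) (1 / w t) t := by
  have hinv : ContinuousOn (fun s => 1 / w s) (Ioo 0 β) :=
    continuousOn_const.div hw fun s hs => (hpos s hs).ne'
  have hsub : uIcc x t ⊆ Ioo 0 β := ordConnected_Ioo.uIcc_subset hx ht
  exact integral_hasDerivAt_right (hinv.mono hsub).intervalIntegrable
    (hinv.stronglyMeasurableAtFilter isOpen_Ioo t ht) (hinv.continuousAt (isOpen_Ioo.mem_nhds ht))

noncomputable def hardyIntegrand (a : ℝ) (w η η' : ℝ → ℝ) (t : ℝ) : ℝ :=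
  w t * (η' t ^ 2 - a ^ 2 / t ^ 2 * η t ^ 2)

def IsSemiStableWeight (a : ℝ) (w : ℝ → ℝ) : Prop :=
  ∀ r₁ r₂ : ℝ, 0 < r₁ → r₁ < r₂ → r₂ < 1 → ∀ η : ℝ → ℝ,
    (∃ C, LipschitzOnWith C η (Icc r₁ r₂)) → η r₁ * w r₁ = 0 → η r₂ * w r₂ = 0 →
    0 ≤ ∫ r in r₁..r₂, hardyIntegrand a w η (deriv η) r

lemma hardyIntegrand_le {a : ℝ} {w η η' : ℝ → ℝ} {t : ℝ} (hw : 0 ≤ w t) :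
    hardyIntegrand a w η η' t ≤ w t * η' t ^ 2 := by
  have : 0 ≤ w t * (a ^ 2 / t ^ 2 * η t ^ 2) := by positivity
  unfold hardyIntegrand
  linarith

lemma hardyIntegrand_div_rpow_eq_zero {a ρ : ℝ} (w : ℝ → ℝ) (t : ℝ) :
    hardyIntegrand a w (fun t => (t / ρ) ^ a) (fun t => a * (t / ρ) ^ a / t) t = 0 := by
  simp only [hardyIntegrand]
  ring

structure IsC1PieceOn (η p p' : ℝ → ℝ) (x y : ℝ) : Prop where
  eqOn : EqOn η p (Icc x y)
  hasDerivAt : ∀ t ∈ Icc x y, HasDerivAt p (p' t) t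
  continuousOn_deriv : ContinuousOn p' (Icc x y)

namespace IsC1PieceOn

variable {a x y : ℝ} {w η p p' : ℝ → ℝ}

lemma exists_lipschitzOnWith (h : IsC1PieceOn η p p' x y) :
    ∃ K, LipschitzOnWith K η (Icc x y) := by
  obtain ⟨K, hK⟩ := exists_lipschitzOnWith_of_hasDerivAt h.hasDerivAt h.continuousOn_deriv
  exact ⟨K, fun s hs t ht => by rw [h.eqOn hs, h.eqOn ht]; exact hK hs ht⟩

lemma hardyIntegrand_eqOn (h : IsC1PieceOn η p p' x y) :
    EqOn (hardyIntegrand a w η (deriv η)) (hardyIntegrand a w p p') (Ioo x y) := by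
  intro t ht
  have hev : η =ᶠ[𝓝 t] p :=
    eventuallyEq_of_mem (isOpen_Ioo.mem_nhds ht) (h.eqOn.mono Ioo_subset_Icc_self)
  simp only [hardyIntegrand, hev.deriv_eq, (h.hasDerivAt t (Ioo_subset_Icc_self ht)).deriv,
    h.eqOn (Ioo_subset_Icc_self ht)]

lemma continuousOn_hardyIntegrand (h : IsC1PieceOn η p p' x y) (hx : 0 < x)
    (hw : ContinuousOn w (Icc x y)) : ContinuousOn (hardyIntegrand a w p p') (Icc x y) := by
  have hp : ContinuousOn p (Icc x y) := fun t ht =>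
    (h.hasDerivAt t ht).continuousAt.continuousWithinAt
  have hinv : ContinuousOn (fun t : ℝ => a ^ 2 / t ^ 2) (Icc x y) :=
    continuousOn_const.div (continuousOn_id.pow 2) fun t ht => pow_ne_zero 2 (hx.trans_le ht.1).ne'
  exact hw.mul ((h.continuousOn_deriv.pow 2).sub (hinv.mul (hp.pow 2)))

lemma intervalIntegrable_hardyIntegrand (h : IsC1PieceOn η p p' x y) (hxy : x ≤ y) (hx : 0 < x)
    (hw : ContinuousOn w (Icc x y)) :
    IntervalIntegrable (hardyIntegrand a w η (deriv η)) volume x y := by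
  rw [intervalIntegrable_iff_integrableOn_Ioo_of_le hxy]
  exact (((h.continuousOn_hardyIntegrand hx hw).integrableOn_compact isCompact_Icc).mono_set
    Ioo_subset_Icc_self).congr_fun h.hardyIntegrand_eqOn.symm measurableSet_Ioo

lemma integral_hardyIntegrand_eq (h : IsC1PieceOn η p p' x y) (hxy : x ≤ y) :
    ∫ t in x..y, hardyIntegrand a w η (deriv η) t = ∫ t in x..y, hardyIntegrand a w p p' t :=
  integral_congr_Ioo_of_le hxy h.hardyIntegrand_eqOn

lemma integral_hardyIntegrand_le (h : IsC1PieceOn η p p' x y) (hxy : x ≤ y) (hx : 0 < x)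
    (hw : ContinuousOn w (Icc x y)) (hnonneg : ∀ t ∈ Icc x y, 0 ≤ w t) :
    ∫ t in x..y, hardyIntegrand a w η (deriv η) t ≤ ∫ t in x..y, w t * p' t ^ 2 := by
  rw [h.integral_hardyIntegrand_eq hxy]
  exact integral_mono_on hxy
    ((h.continuousOn_hardyIntegrand hx hw).intervalIntegrable_of_Icc hxy)
    ((hw.mul (h.continuousOn_deriv.pow 2)).intervalIntegrable_of_Icc hxy) fun t ht =>
      hardyIntegrand_le (hnonneg t ht)

end IsC1PieceOn

namespace IsSemiStableWeight

variable {a : ℝ} {w : ℝ → ℝ}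

lemma eq_zero_of_mem_Ioo (hs : IsSemiStableWeight a w) (ha : a ≠ 0)
    (hw : ContinuousOn w (Ioo 0 1)) (hnonneg : ∀ t ∈ Ioo 0 1, 0 ≤ w t)
    {t₁ t₂ s : ℝ} (ht₁ : 0 < t₁) (ht₂ : t₂ < 1) (hs₁₂ : s ∈ Ioo t₁ t₂)
    (hw₁ : w t₁ = 0) (hw₂ : w t₂ = 0) : w s = 0 := by
  by_contra hws
  have hsub : Icc t₁ t₂ ⊆ Ioo 0 1 := fun t ht => ⟨ht₁.trans_le ht.1, ht.2.trans_lt ht₂⟩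
  have hform : ∀ t, hardyIntegrand a w (fun _ => 1) (deriv fun _ => 1) t =
      -(a ^ 2 / t ^ 2 * w t) := fun t => by
    simp only [hardyIntegrand, deriv_const]
    ring
  have hstab := hs t₁ t₂ ht₁ (hs₁₂.1.trans hs₁₂.2) ht₂ (fun _ => 1)
    ⟨0, (LipschitzWith.const (1 : ℝ)).lipschitzOnWith⟩ (by simp [hw₁]) (by simp [hw₂])
  simp only [hform, intervalIntegral.integral_neg, neg_nonneg] at hstab
  refine hstab.not_gt (integral_pos (hs₁₂.1.trans hs₁₂.2) ?_ ?_ ⟨s, Ioo_subset_Icc_self hs₁₂, ?_⟩)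
  · refine ((continuousOn_const.div (continuousOn_id.pow 2) fun t ht => ?_).mul (hw.mono hsub))
    exact pow_ne_zero 2 (hsub ht).1.ne'
  · exact fun t ht => mul_nonneg (by positivity) (hnonneg t (hsub (Ioc_subset_Icc_self ht)))
  · have hs0 : 0 < s := ht₁.trans hs₁₂.1
    have := (hnonneg s (hsub (Ioo_subset_Icc_self hs₁₂))).lt_of_ne' hws
    positivity

lemma exists_forall_pos (hs : IsSemiStableWeight a w) (ha : a ≠ 0)
    (hw : ContinuousOn w (Ioo 0 1)) (hnonneg : ∀ t ∈ Ioo 0 1, 0 ≤ w t)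
    (hsing : ∀ δ ∈ Ioo (0 : ℝ) 1, ¬ IntegrableOn w (Ioc 0 δ)) :
    ∃ β ∈ Ioo (0 : ℝ) 1, ∀ t ∈ Ioo 0 β, 0 < w t := by
  by_contra! hzero
  have hzero' : ∀ β ∈ Ioo (0 : ℝ) 1, ∃ t ∈ Ioo 0 β, w t = 0 := fun β hβ => by
    obtain ⟨t, ht, hwt⟩ := hzero β hβ
    exact ⟨t, ht, le_antisymm hwt (hnonneg t ⟨ht.1, ht.2.trans hβ.2⟩)⟩
  obtain ⟨t₁, ht₁, hw₁⟩ := hzero' (1 / 2) (by norm_num)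
  have ht₁1 : t₁ < 1 := ht₁.2.trans (by norm_num)
  have hvanish : EqOn w 0 (Ioc 0 (t₁ / 2)) := fun s hs' => by
    have hst₁ : s < t₁ := hs'.2.trans_lt (half_lt_self ht₁.1)
    obtain ⟨t', ht', hw'⟩ := hzero' s ⟨hs'.1, hst₁.trans ht₁1⟩
    exact hs.eq_zero_of_mem_Ioo ha hw hnonneg ht'.1 ht₁1 ⟨ht'.2, hst₁⟩ hw' hw₁
  exact hsing (t₁ / 2) ⟨half_pos ht₁.1, by linarith⟩
    ((integrableOn_zero).congr_fun hvanish.symm measurableSet_Ioc)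

end IsSemiStableWeight

lemma integral_one_div_pos {w : ℝ → ℝ} {β x y : ℝ} (hw : ContinuousOn w (Ioo 0 β))
    (hpos : ∀ t ∈ Ioo 0 β, 0 < w t) (hx : 0 < x) (hxy : x < y) (hyβ : y < β) :
    0 < ∫ t in x..y, 1 / w t := by
  have hsub : Icc x y ⊆ Ioo 0 β := fun t ht => ⟨hx.trans_le ht.1, ht.2.trans_lt hyβ⟩
  refine intervalIntegral_pos_of_pos_on ?_
    (fun t ht => one_div_pos.2 (hpos t (hsub (Ioo_subset_Icc_self ht)))) hxy
  exact (continuousOn_const.div (hw.mono hsub) fun t ht =>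
    (hpos t (hsub ht)).ne').intervalIntegrable_of_Icc hxy.le

noncomputable def capacityTest (w : ℝ → ℝ) (a σ' σ ρ ρ₀ : ℝ) (t : ℝ) : ℝ :=
  if t ≤ σ then (σ / ρ) ^ a / (∫ s in σ'..σ, 1 / w s) * ∫ s in σ'..t, 1 / w s
  else if t ≤ ρ then (t / ρ) ^ a
  else if t ≤ ρ₀ then 1
  else (2 * ρ₀ - t) / ρ₀

section CapacityTest

variable {w : ℝ → ℝ} {a β σ' σ ρ ρ₀ : ℝ}

lemma isC1PieceOn_capacityTest_Icc_σ'_σ (hw : ContinuousOn w (Ioo 0 β))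
    (hpos : ∀ t ∈ Ioo 0 β, 0 < w t) (hσ' : 0 < σ') (hσ'σ : σ' ≤ σ) (hσβ : σ < β) :
    IsC1PieceOn (capacityTest w a σ' σ ρ ρ₀)
      (fun t => (σ / ρ) ^ a / (∫ s in σ'..σ, 1 / w s) * ∫ s in σ'..t, 1 / w s)
      (fun t => (σ / ρ) ^ a / (∫ s in σ'..σ, 1 / w s) * (1 / w t)) σ' σ := by
  have hsub : Icc σ' σ ⊆ Ioo 0 β := fun t ht => ⟨hσ'.trans_le ht.1, ht.2.trans_lt hσβ⟩
  refine ⟨fun _ ht => if_pos ht.2, fun t ht => ?_, ?_⟩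
  · exact (hasDerivAt_integral_one_div hw hpos (hsub (left_mem_Icc.2 hσ'σ)) (hsub ht)).const_mul _
  · exact continuousOn_const.mul
      (continuousOn_const.div (hw.mono hsub) fun t ht => (hpos t (hsub ht)).ne')

lemma isC1PieceOn_capacityTest_Icc_σ_ρ (hD : ∫ s in σ'..σ, 1 / w s ≠ 0) (hσ : 0 < σ)
    (hρ : 0 < ρ) :
    IsC1PieceOn (capacityTest w a σ' σ ρ ρ₀) (fun t => (t / ρ) ^ a)
      (fun t => a * (t / ρ) ^ a / t) σ ρ := by
  have hp : ∀ t ∈ Icc σ ρ, HasDerivAt (fun t => (t / ρ) ^ a) (a * (t / ρ) ^ a / t) t :=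
    fun t ht => hasDerivAt_div_rpow hρ (hσ.trans_le ht.1)
  refine ⟨fun t ht => ?_, hp, ?_⟩
  · rcases ht.1.eq_or_lt with rfl | hσt
    · simp only [capacityTest, if_pos le_rfl]
      exact div_mul_cancel₀ _ hD
    · simp [capacityTest, hσt.not_ge, ht.2]
  · exact (continuousOn_const.mul fun t ht => (hp t ht).continuousAt.continuousWithinAt).div
      continuousOn_id fun t ht => (hσ.trans_le ht.1).ne'

lemma isC1PieceOn_capacityTest_Icc_ρ_ρ₀ (hσρ : σ < ρ) (hρ : ρ ≠ 0) :
    IsC1PieceOn (capacityTest w a σ' σ ρ ρ₀) 1 0 ρ ρ₀ := by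
  refine ⟨fun t ht => ?_, fun t _ => hasDerivAt_const t 1, continuousOn_const⟩
  rcases ht.1.eq_or_lt with rfl | hρt
  · simp [capacityTest, hσρ.not_ge, hρ]
  · simp [capacityTest, (hσρ.trans hρt).not_ge, hρt.not_ge, ht.2]

lemma isC1PieceOn_capacityTest_Icc_ρ₀ (hσρ : σ < ρ) (hρρ₀ : ρ < ρ₀) (hρ₀ : ρ₀ ≠ 0) :
    IsC1PieceOn (capacityTest w a σ' σ ρ ρ₀) (fun t => (2 * ρ₀ - t) / ρ₀) (fun _ => -1 / ρ₀)
      ρ₀ (2 * ρ₀) := by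
  refine ⟨fun t ht => ?_, fun t _ => ?_, continuousOn_const⟩
  · rcases ht.1.eq_or_lt with rfl | hρ₀t
    · simp only [capacityTest, if_neg (hσρ.trans hρρ₀).not_ge, if_neg hρρ₀.not_ge, if_pos le_rfl]
      rw [two_mul, add_sub_cancel_right, div_self hρ₀]
    · simp [capacityTest, (hσρ.trans (hρρ₀.trans hρ₀t)).not_ge, (hρρ₀.trans hρ₀t).not_ge,
        hρ₀t.not_ge]
  · simpa using ((hasDerivAt_id t).const_sub (2 * ρ₀)).div_const ρ₀

lemma exists_lipschitzOnWith_capacityTest (hw : ContinuousOn w (Ioo 0 β))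
    (hpos : ∀ t ∈ Ioo 0 β, 0 < w t) (hσ' : 0 < σ') (hσ'σ : σ' < σ) (hσρ : σ < ρ)
    (hρρ₀ : ρ < ρ₀) (hρ₀β : 2 * ρ₀ < β) :
    ∃ K, LipschitzOnWith K (capacityTest w a σ' σ ρ ρ₀) (Icc σ' (2 * ρ₀)) := by
  have hσ : 0 < σ := hσ'.trans hσ'σ
  have hρ : 0 < ρ := hσ.trans hσρ
  have hD := integral_one_div_pos hw hpos hσ' hσ'σ (by linarith)
  exact exists_lipschitzOnWith_Icc_union (exists_lipschitzOnWith_Icc_union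
    (exists_lipschitzOnWith_Icc_union
      (isC1PieceOn_capacityTest_Icc_σ'_σ hw hpos hσ' hσ'σ.le (by linarith)).exists_lipschitzOnWith
      (isC1PieceOn_capacityTest_Icc_σ_ρ hD.ne' hσ hρ).exists_lipschitzOnWith)
    (isC1PieceOn_capacityTest_Icc_ρ_ρ₀ hσρ hρ.ne').exists_lipschitzOnWith)
    (isC1PieceOn_capacityTest_Icc_ρ₀ hσρ hρρ₀ (hρ.trans hρρ₀).ne').exists_lipschitzOnWith

lemma integral_hardyIntegrand_capacityTest_Icc_σ'_σ_le (hw : ContinuousOn w (Ioo 0 β))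
    (hpos : ∀ t ∈ Ioo 0 β, 0 < w t) (hσ' : 0 < σ') (hσ'σ : σ' < σ) (hσβ : σ < β) :
    let η := capacityTest w a σ' σ ρ ρ₀
    ∫ t in σ'..σ, hardyIntegrand a w η (deriv η) t ≤
      ((σ / ρ) ^ a) ^ 2 / ∫ t in σ'..σ, 1 / w t := by
  intro η
  set D := ∫ t in σ'..σ, 1 / w t
  have hsub : Icc σ' σ ⊆ Ioo 0 β := fun t ht => ⟨hσ'.trans_le ht.1, ht.2.trans_lt hσβ⟩
  have hD : 0 < D := integral_one_div_pos hw hpos hσ' hσ'σ hσβ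
  refine ((isC1PieceOn_capacityTest_Icc_σ'_σ hw hpos hσ' hσ'σ.le hσβ).integral_hardyIntegrand_le
    hσ'σ.le hσ' (hw.mono hsub) fun t ht => (hpos t (hsub ht)).le).trans_eq ?_
  calc ∫ t in σ'..σ, w t * ((σ / ρ) ^ a / D * (1 / w t)) ^ 2
      = ∫ t in σ'..σ, ((σ / ρ) ^ a / D) ^ 2 * (1 / w t) := by
        refine integral_congr fun t ht => ?_
        rw [uIcc_of_le hσ'σ.le] at ht
        have := (hpos t (hsub ht)).ne'
        field_simp
    _ = ((σ / ρ) ^ a) ^ 2 / D := by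
        rw [intervalIntegral.integral_const_mul]
        change ((σ / ρ) ^ a / D) ^ 2 * D = _
        field_simp

lemma integral_hardyIntegrand_capacityTest_Icc_ρ_ρ₀ (hσρ : σ < ρ) (hρρ₀ : ρ < ρ₀) (hρ : 0 < ρ) :
    let η := capacityTest w a σ' σ ρ ρ₀
    ∫ t in ρ..ρ₀, hardyIntegrand a w η (deriv η) t = -(a ^ 2 * ∫ t in ρ..ρ₀, w t / t ^ 2) := by
  intro η
  rw [(isC1PieceOn_capacityTest_Icc_ρ_ρ₀ hσρ hρ.ne').integral_hardyIntegrand_eq hρρ₀.le,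
    ← intervalIntegral.integral_const_mul, ← intervalIntegral.integral_neg]
  congr 1 with t
  simp only [hardyIntegrand, Pi.one_apply, Pi.zero_apply]
  ring

lemma integral_hardyIntegrand_capacityTest_Icc_ρ₀_le (hw : ContinuousOn w (Ioo 0 β))
    (hpos : ∀ t ∈ Ioo 0 β, 0 < w t) (hσρ : σ < ρ) (hρρ₀ : ρ < ρ₀) (hρ : 0 < ρ)
    (hρ₀β : 2 * ρ₀ < β) :
    let η := capacityTest w a σ' σ ρ ρ₀
    ∫ t in ρ₀..2 * ρ₀, hardyIntegrand a w η (deriv η) t ≤ (∫ t in ρ₀..2 * ρ₀, w t) / ρ₀ ^ 2 := by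
  intro η
  have hρ₀ : 0 < ρ₀ := hρ.trans hρρ₀
  have hsub : Icc ρ₀ (2 * ρ₀) ⊆ Ioo 0 β := fun t ht => ⟨hρ₀.trans_le ht.1, ht.2.trans_lt hρ₀β⟩
  refine ((isC1PieceOn_capacityTest_Icc_ρ₀ hσρ hρρ₀ hρ₀.ne').integral_hardyIntegrand_le
    (by linarith) hρ₀ (hw.mono hsub) fun t ht => (hpos t (hsub ht)).le).trans_eq ?_
  rw [← intervalIntegral.integral_div]
  congr 1 with t
  ring

lemma integral_hardyIntegrand_capacityTest_le (hw : ContinuousOn w (Ioo 0 β))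
    (hpos : ∀ t ∈ Ioo 0 β, 0 < w t) (hσ' : 0 < σ') (hσ'σ : σ' < σ) (hσρ : σ < ρ)
    (hρρ₀ : ρ < ρ₀) (hρ₀β : 2 * ρ₀ < β) :
    let η := capacityTest w a σ' σ ρ ρ₀
    ∫ t in σ'..2 * ρ₀, hardyIntegrand a w η (deriv η) t ≤
      ((σ / ρ) ^ a) ^ 2 / (∫ t in σ'..σ, 1 / w t) - a ^ 2 * (∫ t in ρ..ρ₀, w t / t ^ 2) +
        (∫ t in ρ₀..2 * ρ₀, w t) / ρ₀ ^ 2 := by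
  intro η
  have hσ : 0 < σ := hσ'.trans hσ'σ
  have hρ : 0 < ρ := hσ.trans hσρ
  have hρ₀ : 0 < ρ₀ := hρ.trans hρρ₀
  have hc : ∀ {x y}, σ' ≤ x → y ≤ 2 * ρ₀ → ContinuousOn w (Icc x y) := fun hx hy =>
    hw.mono fun t ht => ⟨hσ'.trans_le (hx.trans ht.1), (ht.2.trans hy).trans_lt hρ₀β⟩
  have h₁ := isC1PieceOn_capacityTest_Icc_σ'_σ (a := a) (ρ := ρ) (ρ₀ := ρ₀) hw hpos hσ' hσ'σ.le
    (by linarith)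
  have h₂ := isC1PieceOn_capacityTest_Icc_σ_ρ (a := a) (ρ₀ := ρ₀)
    (integral_one_div_pos hw hpos hσ' hσ'σ (by linarith)).ne' hσ hρ
  have h₃ := isC1PieceOn_capacityTest_Icc_ρ_ρ₀ (w := w) (a := a) (σ' := σ') (ρ₀ := ρ₀) hσρ hρ.ne'
  have h₄ := isC1PieceOn_capacityTest_Icc_ρ₀ (w := w) (a := a) (σ' := σ') hσρ hρρ₀ hρ₀.ne'
  have hi₁ := h₁.intervalIntegrable_hardyIntegrand (a := a) hσ'σ.le hσ' (hc le_rfl (by linarith))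
  have hi₂ := h₂.intervalIntegrable_hardyIntegrand (a := a) hσρ.le hσ (hc hσ'σ.le (by linarith))
  have hi₃ := h₃.intervalIntegrable_hardyIntegrand (a := a) hρρ₀.le hρ
    (hc (by linarith) (by linarith))
  have hi₄ := h₄.intervalIntegrable_hardyIntegrand (a := a) (by linarith) hρ₀
    (hc (by linarith) le_rfl)
  rw [← integral_add_adjacent_intervals ((hi₁.trans hi₂).trans hi₃) hi₄,
    ← integral_add_adjacent_intervals (hi₁.trans hi₂) hi₃,
    ← integral_add_adjacent_intervals hi₁ hi₂]
  have hI₁ := integral_hardyIntegrand_capacityTest_Icc_σ'_σ_le (a := a) (ρ := ρ) (ρ₀ := ρ₀) hw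
    hpos hσ' hσ'σ (by linarith)
  have hI₂ : ∫ t in σ..ρ, hardyIntegrand a w η (deriv η) t = 0 := by
    rw [h₂.integral_hardyIntegrand_eq hσρ.le]
    simp [hardyIntegrand_div_rpow_eq_zero]
  have hI₃ := integral_hardyIntegrand_capacityTest_Icc_ρ_ρ₀ (w := w) (a := a) (σ' := σ') hσρ hρρ₀
    hρ
  have hI₄ := integral_hardyIntegrand_capacityTest_Icc_ρ₀_le (a := a) (σ' := σ') hw hpos hσρ hρρ₀
    hρ hρ₀β
  linarith

end CapacityTest

theorem IsSemiStableWeight.integral_div_sq_le_of_lt_integral_one_div {a β : ℝ} {w : ℝ → ℝ}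
    (hs : IsSemiStableWeight a w) (hβ : β ≤ 1)
    (hw : ContinuousOn w (Ioo 0 β)) (hpos : ∀ t ∈ Ioo 0 β, 0 < w t)
    {σ' σ ρ ρ₀ : ℝ} (hσ' : 0 < σ') (hσ'σ : σ' < σ) (hσρ : σ < ρ) (hρρ₀ : ρ < ρ₀)
    (hρ₀β : 2 * ρ₀ < β) (hcap : (σ / ρ) ^ (2 * a) < ∫ t in σ'..σ, 1 / w t) :
    a ^ 2 * ∫ t in ρ..ρ₀, w t / t ^ 2 ≤ (∫ t in ρ₀..2 * ρ₀, w t) / ρ₀ ^ 2 + 1 := by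
  have hσρ₀ : σ < ρ₀ := hσρ.trans hρρ₀
  have hleft : capacityTest w a σ' σ ρ ρ₀ σ' = 0 := by simp [capacityTest, hσ'σ.le]
  have hright : capacityTest w a σ' σ ρ ρ₀ (2 * ρ₀) = 0 := by
    simp [capacityTest, show ¬ 2 * ρ₀ ≤ σ by linarith, show ¬ 2 * ρ₀ ≤ ρ by linarith,
      show ¬ 2 * ρ₀ ≤ ρ₀ by linarith]
  have hstab := hs σ' (2 * ρ₀) hσ' (by linarith) (by linarith) (capacityTest w a σ' σ ρ ρ₀)
    (exists_lipschitzOnWith_capacityTest hw hpos hσ' hσ'σ hσρ hρρ₀ hρ₀β)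
    (by simp [hleft]) (by simp [hright])
  have hσρ' : 0 ≤ σ / ρ := div_nonneg (hσ'.trans hσ'σ).le (hσ'.trans (hσ'σ.trans hσρ)).le
  have hcap' : ((σ / ρ) ^ a) ^ 2 / (∫ t in σ'..σ, 1 / w t) ≤ 1 := by
    rw [div_le_one (integral_one_div_pos hw hpos hσ' hσ'σ (by linarith)), ← Real.rpow_two,
      ← Real.rpow_mul hσρ', mul_comm]
    exact hcap.le
  linarith [integral_hardyIntegrand_capacityTest_le (a := a) hw hpos hσ' hσ'σ hσρ hρρ₀ hρ₀β]

theorem IsSemiStableWeight.exists_integral_one_div_le {a β : ℝ} {w : ℝ → ℝ}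
    (hs : IsSemiStableWeight a w) (ha : a ≠ 0) (hβ : β ≤ 1)
    (hw : ContinuousOn w (Ioo 0 β)) (hpos : ∀ t ∈ Ioo 0 β, 0 < w t)
    {ρ₀ : ℝ} (hρ₀ : 0 < ρ₀) (hρ₀β : 2 * ρ₀ < β) (hsing : ¬ IntegrableOn w (Ioc 0 ρ₀)) :
    ∃ ρ ∈ Ioo 0 ρ₀, ∀ σ ∈ Ioo 0 ρ, ∀ σ' ∈ Ioo 0 σ, ∫ t in σ'..σ, 1 / w t ≤ (σ / ρ) ^ (2 * a) := by
  by_contra! hcap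
  have hsub : Ioc 0 ρ₀ ⊆ Ioo 0 β := fun t ht => ⟨ht.1, ht.2.trans_lt (by linarith)⟩
  have hbound : ∀ ρ ∈ Ioo 0 ρ₀, ∫ t in ρ..ρ₀, w t / t ^ 2 ≤
      ((∫ t in ρ₀..2 * ρ₀, w t) / ρ₀ ^ 2 + 1) / a ^ 2 := fun ρ hρ => by
    obtain ⟨σ, hσ, σ', hσ', hlt⟩ := hcap ρ hρ
    rw [le_div_iff₀ (by positivity), mul_comm]
    exact hs.integral_div_sq_le_of_lt_integral_one_div hβ hw hpos hσ'.1 hσ'.2 hσ.2 hρ.2 hρ₀β hlt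
  have hint : IntegrableOn (fun t => w t / t ^ 2) (Ioc 0 ρ₀) :=
    integrableOn_Ioc_of_forall_integral_le
      ((hw.mono hsub).div (continuousOn_id.pow 2) fun t ht => pow_ne_zero 2 ht.1.ne')
      (fun t ht => div_nonneg (hpos t (hsub ht)).le (sq_nonneg t)) hbound
  refine hsing ((hint.const_mul (ρ₀ ^ 2)).mono' ((hw.mono hsub).aestronglyMeasurable
    measurableSet_Ioc) ((ae_restrict_mem measurableSet_Ioc).mono fun t ht => ?_))
  have hwt := (hpos t (hsub ht)).le
  rw [Real.norm_of_nonneg hwt, mul_div_assoc', le_div_iff₀ (pow_pos ht.1 2), mul_comm]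
  exact mul_le_mul_of_nonneg_right (pow_le_pow_left₀ ht.1.le ht.2 2) hwt

lemma integrableOn_rpow_mul_deriv_sq {u : ℝ → ℝ} {b δ : ℝ} (q : ℝ)
    (hu : ContDiffOn ℝ 1 u (Ioc 0 b)) (hδ : 0 < δ) :
    IntegrableOn (fun r => r ^ q * deriv u r ^ 2) (Ioc δ b) := by
  have hsub : Icc δ b ⊆ Ioc 0 b := fun t ht => ⟨hδ.trans_le ht.1, ht.2⟩
  have hcont : ContinuousOn (fun r => r ^ q * derivWithin u (Ioc 0 b) r ^ 2) (Icc δ b) :=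
    (continuousOn_id.rpow_const fun t ht => Or.inl (hδ.trans_le ht.1).ne').mul
      (((hu.continuousOn_derivWithin (uniqueDiffOn_Ioc 0 b) le_rfl).mono hsub).pow 2)
  rw [integrableOn_Ioc_iff_integrableOn_Ioo]
  refine ((hcont.integrableOn_compact isCompact_Icc).mono_set Ioo_subset_Icc_self).congr_fun
    (fun t ht => ?_) measurableSet_Ioo
  have : Ioc 0 b ∈ 𝓝 t := mem_of_superset (isOpen_Ioo.mem_nhds ⟨hδ.trans ht.1, ht.2⟩)
    Ioo_subset_Ioc_self
  simp only [derivWithin_of_mem_nhds this]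

lemma integral_one_div_sq_le {g : ℝ → ℝ} {p x y : ℝ} (hp : 0 ≤ p) (hx : 0 < x) (hxy : x ≤ y)
    (hg : ContinuousOn g (Icc x y)) (hg0 : ∀ t ∈ Icc x y, g t ≠ 0) :
    ∫ t in x..y, 1 / g t ^ 2 ≤ y ^ p * ∫ t in x..y, 1 / (t ^ p * g t ^ 2) := by
  have hpow : ContinuousOn (fun t : ℝ => t ^ p) (Icc x y) :=
    continuousOn_id.rpow_const fun t ht => Or.inl (hx.trans_le ht.1).ne'
  have hgt : ∀ t ∈ Icc x y, 0 < g t ^ 2 := fun t ht => by have := hg0 t ht; positivity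
  have hwt : ∀ t ∈ Icc x y, 0 < t ^ p * g t ^ 2 := fun t ht =>
    mul_pos (Real.rpow_pos_of_pos (hx.trans_le ht.1) p) (hgt t ht)
  rw [← intervalIntegral.integral_const_mul]
  refine integral_mono_on hxy
    ((continuousOn_const.div (hg.pow 2) fun t ht => (hgt t ht).ne').intervalIntegrable_of_Icc hxy)
    ((continuousOn_const.mul (continuousOn_const.div (hpow.mul (hg.pow 2)) fun t ht =>
      (hwt t ht).ne')).intervalIntegrable_of_Icc hxy) fun t ht => ?_
  have ht0 : 0 < t := hx.trans_le ht.1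
  have hgt := hgt t ht
  rw [mul_one_div, div_le_div_iff₀ hgt (hwt t ht), one_mul]
  exact mul_le_mul_of_nonneg_right (Real.rpow_le_rpow ht0.le ht.2 hp) hgt.le

lemma not_integrableOn_Ioc_rpow_mul_deriv_sq {u : ℝ → ℝ} {q b δ : ℝ}
    (hu : ContDiffOn ℝ 1 u (Ioc 0 b))
    (hsing : ¬ IntegrableOn (fun r => r ^ q * deriv u r ^ 2) (Ioc 0 b)) (hδ : δ ∈ Ioo 0 b) :
    ¬ IntegrableOn (fun r => r ^ q * deriv u r ^ 2) (Ioc 0 δ) := fun hint => hsing <| by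
  rw [← Ioc_union_Ioc_eq_Ioc hδ.1.le hδ.2.le]
  exact hint.union (integrableOn_rpow_mul_deriv_sq q hu hδ.1)

lemma isSemiStableWeight_rpow_mul_sq {g : ℝ → ℝ} {q a : ℝ}
    (hstab : ∀ r₁ r₂ : ℝ, 0 < r₁ → r₁ < r₂ → r₂ < 1 → ∀ η : ℝ → ℝ,
      (∃ C, LipschitzOnWith C η (Icc r₁ r₂)) → η r₁ * g r₁ = 0 → η r₂ * g r₂ = 0 →
      0 ≤ ∫ r in r₁..r₂, r ^ q * g r ^ 2 * (deriv η r ^ 2 - a ^ 2 / r ^ 2 * η r ^ 2)) :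
    IsSemiStableWeight a (fun r => r ^ q * g r ^ 2) := by
  intro r₁ r₂ h₁ h₁₂ h₂ η hη hη₁ hη₂
  have hvanish : ∀ r, 0 < r → η r * (r ^ q * g r ^ 2) = 0 → η r * g r = 0 := fun r hr h => by
    rcases mul_eq_zero.1 h with h | h
    · simp [h]
    · simp [(Real.rpow_pos_of_pos hr _).ne'] at h
      simp [h]
  exact hstab r₁ r₂ h₁ h₁₂ h₂ η hη (hvanish r₁ h₁ hη₁) (hvanish r₂ (h₁.trans h₁₂) hη₂)

lemma integral_one_div_sq_le_rpow_of_integral_le {g : ℝ → ℝ} {q a β ρ r : ℝ} (hq : 0 ≤ q)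
    (hg : ContinuousOn g (Ioo 0 β)) (hpos : ∀ t ∈ Ioo 0 β, 0 < t ^ q * g t ^ 2) (hρβ : ρ ≤ β)
    (hcap : ∀ σ ∈ Ioo 0 ρ, ∀ σ' ∈ Ioo 0 σ,
      ∫ t in σ'..σ, 1 / (t ^ q * g t ^ 2) ≤ (σ / ρ) ^ (2 * a))
    (hr : r ∈ Ioo 0 ρ) :
    ∫ t in (r / 2)..r, 1 / g t ^ 2 ≤ (ρ ^ (2 * a))⁻¹ * r ^ (q + 2 * a) := by
  have hsub : Icc (r / 2) r ⊆ Ioo 0 β :=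
    fun t ht => ⟨(half_pos hr.1).trans_le ht.1, ht.2.trans_lt (hr.2.trans_le hρβ)⟩
  calc ∫ t in (r / 2)..r, 1 / g t ^ 2
      ≤ r ^ q * ∫ t in (r / 2)..r, 1 / (t ^ q * g t ^ 2) :=
        integral_one_div_sq_le hq (half_pos hr.1) (half_le_self hr.1.le) (hg.mono hsub)
          fun t ht h => (hpos t (hsub ht)).ne' (by simp [h])
    _ ≤ r ^ q * (r / ρ) ^ (2 * a) :=
        mul_le_mul_of_nonneg_left (hcap r hr (r / 2) ⟨half_pos hr.1, half_lt_self hr.1⟩)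
          (Real.rpow_nonneg hr.1.le _)
    _ = (ρ ^ (2 * a))⁻¹ * r ^ (q + 2 * a) := by
        rw [Real.div_rpow hr.1.le (hr.1.trans hr.2).le, Real.rpow_add hr.1]
        ring

theorem stmt_7_general (N : ℕ) (hN : 2 ≤ N)
    (u : ℝ → ℝ) (hu : ContDiffOn ℝ 2 u (Ioc (0 : ℝ) 1))
    (hstab : ∀ r₁ r₂ : ℝ, 0 < r₁ → r₁ < r₂ → r₂ < 1 → ∀ η : ℝ → ℝ,
      (∃ C, LipschitzOnWith C η (Icc r₁ r₂)) →
      η r₁ * deriv u r₁ = 0 → η r₂ * deriv u r₂ = 0 →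
      0 ≤ ∫ r in r₁..r₂,
        r ^ ((N : ℝ) - 1) * (deriv u r) ^ 2 *
          ((deriv η r) ^ 2 - ((N : ℝ) - 1) / r ^ 2 * (η r) ^ 2))
    (hH1 : ¬ IntegrableOn (fun r : ℝ => r ^ ((N : ℝ) - 1) * (deriv u r) ^ 2)
      (Ioc (0 : ℝ) 1)) :
    ∃ K > (0 : ℝ), ∃ r₀ ∈ Ioo (0 : ℝ) 1, ∀ r ∈ Ioo (0 : ℝ) r₀,
      (∫ s in (r / 2)..r, 1 / (deriv u s) ^ 2)
        ≤ K * r ^ ((N : ℝ) + 2 * Real.sqrt ((N : ℝ) - 1) - 1) := by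
  have hN1 : (0 : ℝ) < N - 1 := by
    have : (2 : ℝ) ≤ N := by exact_mod_cast hN
    linarith
  set a := Real.sqrt ((N : ℝ) - 1)
  have ha : 0 < a := Real.sqrt_pos.2 hN1
  set w := fun r : ℝ => r ^ ((N : ℝ) - 1) * deriv u r ^ 2
  have hu₁ : ContDiffOn ℝ 1 u (Ioc 0 1) := hu.of_le one_le_two
  have hu' : ContinuousOn (deriv u) (Ioo 0 1) :=
    (hu₁.mono Ioo_subset_Ioc_self).continuousOn_deriv_of_isOpen isOpen_Ioo le_rfl
  have hw : ContinuousOn w (Ioo 0 1) :=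
    (continuousOn_id.rpow_const fun _ ht => Or.inl ht.1.ne').mul (hu'.pow 2)
  have hs : IsSemiStableWeight a w :=
    isSemiStableWeight_rpow_mul_sq (by simpa only [a, Real.sq_sqrt hN1.le] using hstab)
  obtain ⟨β, hβ, hpos⟩ := hs.exists_forall_pos ha.ne' hw
    (fun t ht => mul_nonneg (Real.rpow_nonneg ht.1.le _) (sq_nonneg _))
    fun δ hδ => not_integrableOn_Ioc_rpow_mul_deriv_sq hu₁ hH1 hδ
  obtain ⟨ρ, hρ, hcap⟩ := hs.exists_integral_one_div_le ha.ne' hβ.2.le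
    (hw.mono (Ioo_subset_Ioo_right hβ.2.le)) hpos (ρ₀ := β / 4) (by linarith [hβ.1])
    (by linarith [hβ.1]) (not_integrableOn_Ioc_rpow_mul_deriv_sq hu₁ hH1 ⟨by linarith [hβ.1],
      by linarith [hβ.2]⟩)
  refine ⟨(ρ ^ (2 * a))⁻¹, by have := hρ.1; positivity, ρ, ⟨hρ.1, by linarith [hρ.2, hβ.2]⟩,
    fun r hr => ?_⟩
  rw [show (N : ℝ) + 2 * a - 1 = (N - 1) + 2 * a by ring]
  exact integral_one_div_sq_le_rpow_of_integral_le hN1.le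
    (hu'.mono (Ioo_subset_Ioo_right hβ.2.le)) hpos
    (by linarith [hρ.2, hβ.1]) hcap hr

theorem stmt_7 (N : ℕ) (hN : 2 ≤ N) (f : ℝ → ℝ) (hf : ContDiff ℝ 1 f)
    (u : ℝ → ℝ) (hu : ContDiffOn ℝ 2 u (Ioc (0 : ℝ) 1))
    (heq : ∀ r ∈ Ioc (0 : ℝ) 1,
      -(deriv (deriv u) r) - ((N : ℝ) - 1) / r * deriv u r = f (u r))
    (hstab : ∀ r₁ r₂ : ℝ, 0 < r₁ → r₁ < r₂ → r₂ < 1 → ∀ η : ℝ → ℝ,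
      (∃ C, LipschitzOnWith C η (Icc r₁ r₂)) →
      η r₁ * deriv u r₁ = 0 → η r₂ * deriv u r₂ = 0 →
      0 ≤ ∫ r in r₁..r₂,
        r ^ ((N : ℝ) - 1) * (deriv u r) ^ 2 *
          ((deriv η r) ^ 2 - ((N : ℝ) - 1) / r ^ 2 * (η r) ^ 2))
    (hH1 : ¬ IntegrableOn (fun r : ℝ => r ^ ((N : ℝ) - 1) * (deriv u r) ^ 2)
      (Ioc (0 : ℝ) 1)) :
    ∃ K > (0 : ℝ), ∃ r₀ ∈ Ioo (0 : ℝ) 1, ∀ r ∈ Ioo (0 : ℝ) r₀,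
      (∫ s in (r / 2)..r, 1 / (deriv u s) ^ 2)
        ≤ K * r ^ ((N : ℝ) + 2 * Real.sqrt ((N : ℝ) - 1) - 1) :=
  stmt_7_general N hN u hu hstab hH1
end

section
/- Let N ≥ 2, r > 0, K > 0, and let w : [r/2, r] → ℝ be continuous, nonvanishing, with ∫_{r/2}^{r} ds / w(s)² ≤ K r^{N + 2√(N-1) - 1}. Then |∫_{r/2}^{r} w(s) ds| ≥ M' r^{-N/2 - √(N-1) + 2}, where M' = 2^{-3/2} K^{-1/2}. -/
open Real Set intervalIntegral MeasureTheory

/-! Hölder's inequality with exponents `3` and `3 / 2`, applied to `|w|^(-2/3) * |w|^(2/3) = 1`,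
gives `r / 2 ≤ (∫ 1 / w²)^(1/3) * (∫ |w|)^(2/3)`. A nonvanishing continuous `w` has constant
sign, so `∫ |w| = |∫ w|`, and solving for `|∫ w|` with the assumed bound on `∫ 1 / w²` gives the
claim. -/

theorem ContinuousOn.memLp_restrict_Icc {f : ℝ → ℝ} {a b : ℝ} (hf : ContinuousOn f (Icc a b))
    (p : ENNReal) : MemLp f p (volume.restrict (Icc a b)) := by
  obtain ⟨C, hC⟩ := isCompact_Icc.exists_bound_of_continuousOn hf
  have : IsFiniteMeasure (volume.restrict (Icc a b)) :=
    isFiniteMeasure_restrict.mpr measure_Icc_lt_top.ne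
  refine MemLp.of_bound (hf.aestronglyMeasurable measurableSet_Icc) C ?_
  filter_upwards [ae_restrict_mem measurableSet_Icc] with x hx using hC x hx

theorem ContinuousOn.pos_or_neg_of_ne_zero {w : ℝ → ℝ} {a b : ℝ}
    (hw : ContinuousOn w (Icc a b)) (hnv : ∀ s ∈ Icc a b, w s ≠ 0) :
    (∀ s ∈ Icc a b, 0 < w s) ∨ (∀ s ∈ Icc a b, w s < 0) := by
  by_contra! ⟨⟨x, hx, hwx⟩, ⟨y, hy, hwy⟩⟩
  have hzero : (0 : ℝ) ∈ w '' Icc a b :=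
    (isPreconnected_Icc.image w hw).Icc_subset (mem_image_of_mem w hx)
      (mem_image_of_mem w hy) ⟨hwx, hwy⟩
  obtain ⟨t, ht, hwt⟩ := hzero
  exact hnv t ht hwt

theorem abs_integral_eq_integral_abs_of_ne_zero {w : ℝ → ℝ} {a b : ℝ} (hab : a ≤ b)
    (hw : ContinuousOn w (Icc a b)) (hnv : ∀ s ∈ Icc a b, w s ≠ 0) :
    |∫ s in a..b, w s| = ∫ s in a..b, |w s| := by
  rcases hw.pos_or_neg_of_ne_zero hnv with hpos | hneg
  · rw [abs_of_nonneg (integral_nonneg hab fun s hs => (hpos s hs).le)]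
    refine integral_congr fun s hs => (abs_of_pos (hpos s ?_)).symm
    rwa [uIcc_of_le hab] at hs
  · rw [← abs_neg, ← intervalIntegral.integral_neg,
      abs_of_nonneg (integral_nonneg hab fun s hs => neg_nonneg.mpr (hneg s hs).le)]
    refine integral_congr fun s hs => (abs_of_neg (hneg s ?_)).symm
    rwa [uIcc_of_le hab] at hs

theorem sub_le_integral_inv_sq_rpow_mul_integral_abs_rpow {w : ℝ → ℝ} {a b : ℝ} (hab : a ≤ b)
    (hw : ContinuousOn w (Icc a b)) (hnv : ∀ s ∈ Icc a b, w s ≠ 0) :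
    b - a ≤ (∫ s in a..b, 1 / w s ^ 2) ^ (1 / 3 : ℝ) * (∫ s in a..b, |w s|) ^ (2 / 3 : ℝ) := by
  set μ := volume.restrict (Icc a b)
  have hIcc (f : ℝ → ℝ) : ∫ s in a..b, f s = ∫ s, f s ∂μ := by
    rw [integral_of_le hab, integral_Icc_eq_integral_Ioc]
  have hcongr {f g : ℝ → ℝ} (h : ∀ s ∈ Icc a b, f s = g s) : ∫ s, f s ∂μ = ∫ s, g s ∂μ :=
    setIntegral_congr_fun measurableSet_Icc h
  have habs : ∀ s ∈ Icc a b, 0 < |w s| := fun s hs => abs_pos.mpr (hnv s hs)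
  have holder := integral_mul_le_Lp_mul_Lq_of_nonneg (μ := μ)
    (holderConjugate_iff.mpr ⟨by norm_num, by norm_num⟩ : HolderConjugate 3 (3 / 2))
    (Filter.Eventually.of_forall fun s => rpow_nonneg (abs_nonneg (w s)) (-2 / 3))
    (Filter.Eventually.of_forall fun s => rpow_nonneg (abs_nonneg (w s)) (2 / 3))
    ((hw.abs.rpow_const fun s hs => Or.inl (habs s hs).ne').memLp_restrict_Icc _)
    ((hw.abs.rpow_const fun s _ => Or.inr (by norm_num)).memLp_restrict_Icc _)
  calc b - a = ∫ s, |w s| ^ (-2 / 3 : ℝ) * |w s| ^ (2 / 3 : ℝ) ∂μ := by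
        rw [hcongr (g := fun _ => 1) fun s hs => by rw [← rpow_add (habs s hs)]; norm_num]
        simp [μ, hab]
    _ ≤ _ := holder
    _ = _ := by
        rw [hIcc, hIcc, hcongr (f := fun s => (|w s| ^ (-2 / 3 : ℝ)) ^ (3 : ℝ))
          (g := fun s => 1 / w s ^ 2), hcongr (f := fun s => (|w s| ^ (2 / 3 : ℝ)) ^ (3 / 2 : ℝ))
          (g := fun s => |w s|)]
        · norm_num
        all_goals intro s _; rw [← rpow_mul (abs_nonneg _)]; norm_num

theorem rpow_three_halves_mul_rpow_neg_half_le {c A B : ℝ} (hc : 0 ≤ c) (hA : 0 < A)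
    (hB : 0 ≤ B) (h : c ≤ A ^ (1 / 3 : ℝ) * B ^ (2 / 3 : ℝ)) :
    c ^ (3 / 2 : ℝ) * A ^ (-1 / 2 : ℝ) ≤ B := by
  calc c ^ (3 / 2 : ℝ) * A ^ (-1 / 2 : ℝ)
      ≤ (A ^ (1 / 3 : ℝ) * B ^ (2 / 3 : ℝ)) ^ (3 / 2 : ℝ) * A ^ (-1 / 2 : ℝ) := by gcongr
    _ = A ^ (1 / 2 : ℝ) * A ^ (-1 / 2 : ℝ) * B := by
        rw [mul_rpow (by positivity) (by positivity), ← rpow_mul hA.le, ← rpow_mul hB]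
        norm_num
        ring
    _ = B := by rw [← rpow_add hA]; norm_num

theorem half_rpow_mul_rpow_neg_half {r K : ℝ} (hr : 0 < r) (hK : 0 < K) (e : ℝ) :
    (r / 2) ^ (3 / 2 : ℝ) * (K * r ^ e) ^ (-1 / 2 : ℝ)
      = 2 ^ (-3 / 2 : ℝ) * K ^ (-1 / 2 : ℝ) * r ^ (3 / 2 - e / 2) := by
  rw [div_rpow hr.le zero_le_two, mul_rpow hK.le (by positivity), ← rpow_mul hr.le,
    sub_eq_add_neg, rpow_add hr, div_eq_mul_inv, ← rpow_neg zero_le_two]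
  ring_nf

theorem stmt_8_general (N : ℕ) (r K : ℝ) (hr : 0 < r) (hK : 0 < K)
    (w : ℝ → ℝ) (hw : ContinuousOn w (Icc (r / 2) r))
    (hnv : ∀ s ∈ Icc (r / 2) r, w s ≠ 0)
    (hint : (∫ s in (r / 2)..r, 1 / (w s) ^ 2)
      ≤ K * r ^ ((N : ℝ) + 2 * Real.sqrt ((N : ℝ) - 1) - 1)) :
    (2 : ℝ) ^ (-(3 : ℝ) / 2) * K ^ (-(1 : ℝ) / 2) *
        r ^ (-(N : ℝ) / 2 - Real.sqrt ((N : ℝ) - 1) + 2)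
      ≤ |∫ s in (r / 2)..r, w s| := by
  set e := (N : ℝ) + 2 * Real.sqrt ((N : ℝ) - 1) - 1
  have hle : r / 2 ≤ r := by linarith
  have holder := sub_le_integral_inv_sq_rpow_mul_integral_abs_rpow hle hw hnv
  rw [← abs_integral_eq_integral_abs_of_ne_zero hle hw hnv] at holder
  have hinv_sq_nonneg : 0 ≤ ∫ s in (r / 2)..r, 1 / w s ^ 2 :=
    intervalIntegral.integral_nonneg hle fun s _ => by positivity
  have hbound : r / 2 ≤ (K * r ^ e) ^ (1 / 3 : ℝ) * |∫ s in (r / 2)..r, w s| ^ (2 / 3 : ℝ) := by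
    calc r / 2 = r - r / 2 := by ring
      _ ≤ _ := holder
      _ ≤ _ := by gcongr
  calc (2 : ℝ) ^ (-(3 : ℝ) / 2) * K ^ (-(1 : ℝ) / 2) *
        r ^ (-(N : ℝ) / 2 - Real.sqrt ((N : ℝ) - 1) + 2)
      = (r / 2) ^ (3 / 2 : ℝ) * (K * r ^ e) ^ (-1 / 2 : ℝ) := by
        rw [half_rpow_mul_rpow_neg_half hr hK]
        congr 2
        ring
    _ ≤ _ := rpow_three_halves_mul_rpow_neg_half_le (by positivity) (by positivity)
        (abs_nonneg _) hbound

theorem stmt_8 (N : ℕ) (hN : 2 ≤ N) (r K : ℝ) (hr : 0 < r) (hK : 0 < K)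
    (w : ℝ → ℝ) (hw : ContinuousOn w (Icc (r / 2) r))
    (hnv : ∀ s ∈ Icc (r / 2) r, w s ≠ 0)
    (hint : (∫ s in (r / 2)..r, 1 / (w s) ^ 2)
      ≤ K * r ^ ((N : ℝ) + 2 * Real.sqrt ((N : ℝ) - 1) - 1)) :
    (2 : ℝ) ^ (-(3 : ℝ) / 2) * K ^ (-(1 : ℝ) / 2) *
        r ^ (-(N : ℝ) / 2 - Real.sqrt ((N : ℝ) - 1) + 2)
      ≤ |∫ s in (r / 2)..r, w s| :=
  stmt_8_general N r K hr hK w hw hnv hint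
end

section
/- Let u : (0, 1] → ℝ be C¹ and monotone on (0, r₀) for some r₀ ∈ (0,1), and suppose there exists M' > 0 and γ < 0 such that |u(r) - u(r/2)| ≥ M' r^γ for all r ∈ (0, r₀). Then there exist M₁, M₂ > 0 such that |u(r)| ≥ M₁ r^γ - M₂ for all r ∈ (0, r₀). -/
open Set

theorem stmt_11 (u : ℝ → ℝ) (hu : ContDiffOn ℝ 1 u (Ioc (0 : ℝ) 1))
    (r₀ : ℝ) (hr₀ : r₀ ∈ Ioo (0 : ℝ) 1)
    (hmono : MonotoneOn u (Ioo (0 : ℝ) r₀) ∨ AntitoneOn u (Ioo (0 : ℝ) r₀))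
    (M' : ℝ) (hM' : 0 < M') (γ : ℝ) (hγ : γ < 0)
    (hdbl : ∀ r ∈ Ioo (0 : ℝ) r₀, M' * r ^ γ ≤ |u r - u (r / 2)|) :
    ∃ M₁ > (0 : ℝ), ∃ M₂ > (0 : ℝ), ∀ r ∈ Ioo (0 : ℝ) r₀,
      M₁ * r ^ γ - M₂ ≤ |u r| := by
  obtain ⟨hr₀0, hr₀1⟩ := hr₀
  have hcont : ContinuousOn u (Icc (r₀/2) r₀) := by
    apply hu.continuousOn.mono
    intro x hx
    exact ⟨lt_of_lt_of_le (by linarith) hx.1, le_trans hx.2 hr₀1.le⟩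
  obtain ⟨C, hC⟩ := isCompact_Icc.exists_bound_of_continuousOn hcont
  have hC'0 : (0:ℝ) ≤ max C 0 := le_max_right _ _
  have hCb : ∀ x ∈ Icc (r₀/2) r₀, |u x| ≤ max C 0 := fun x hx =>
    (hC x hx).trans (le_max_left _ _)
  have hM₁0 : 0 < M' * 2 ^ γ := mul_pos hM' (Real.rpow_pos_of_pos two_pos γ)
  have hrpow0 : 0 < (r₀/2) ^ γ := Real.rpow_pos_of_pos (by linarith) γ
  have hprod : 0 < M' * 2 ^ γ * (r₀/2) ^ γ := mul_pos hM₁0 hrpow0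
  refine ⟨M' * 2 ^ γ, hM₁0, max C 0 + M' * 2 ^ γ * (r₀/2) ^ γ + 1, by linarith, ?_⟩
  rintro r ⟨hr0, hrr₀⟩
  by_cases hcase : r₀/2 ≤ r
  · have h1 : r ^ γ ≤ (r₀/2) ^ γ :=
      Real.rpow_le_rpow_of_nonpos (by linarith) hcase hγ.le
    have h2 := mul_le_mul_of_nonneg_left h1 hM₁0.le
    linarith [abs_nonneg (u r)]
  · push_neg at hcase
    have hsI : 2 * r ∈ Ioo (0:ℝ) r₀ := ⟨by linarith, by linarith⟩
    have hss : 2 * r / 2 = r := by ring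
    have hd := hdbl (2 * r) hsI
    rw [hss] at hd
    have hsγ : (2 * r) ^ γ = 2 ^ γ * r ^ γ := Real.mul_rpow (by norm_num) hr0.le
    rw [hsγ, ← mul_assoc] at hd
    have hrI : r ∈ Ioo (0:ℝ) r₀ := ⟨hr0, hrr₀⟩
    have hhalfI : r₀/2 ∈ Ioo (0:ℝ) r₀ := ⟨by linarith, by linarith⟩
    have hhalfC : |u (r₀/2)| ≤ max C 0 := hCb _ ⟨le_refl _, by linarith⟩
    rcases hmono with hm | hm
    · have hrs : u r ≤ u (2 * r) := hm hrI hsI (by linarith)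
      have husC : u (2 * r) ≤ max C 0 := by
        rcases le_or_gt (r₀/2) (2 * r) with h | h
        · exact (le_abs_self _).trans (hCb _ ⟨h, hsI.2.le⟩)
        · exact (hm hsI hhalfI h.le).trans ((le_abs_self _).trans hhalfC)
      rw [abs_of_nonneg (by linarith)] at hd
      have : M' * 2 ^ γ * r ^ γ - (max C 0 + M' * 2 ^ γ * (r₀/2) ^ γ + 1) ≤ -u r := by
        linarith
      exact this.trans (neg_le_abs _)
    · have hrs : u (2 * r) ≤ u r := hm hrI hsI (by linarith)
      have husC : -(max C 0) ≤ u (2 * r) := by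
        rcases le_or_gt (r₀/2) (2 * r) with h | h
        · linarith [neg_abs_le (u (2 * r)), hCb _ ⟨h, hsI.2.le⟩]
        · have := hm hsI hhalfI h.le
          linarith [neg_abs_le (u (r₀/2))]
      rw [abs_of_nonpos (by linarith)] at hd
      have : M' * 2 ^ γ * r ^ γ - (max C 0 + M' * 2 ^ γ * (r₀/2) ^ γ + 1) ≤ u r := by
        linarith
      exact this.trans (le_abs_self _)
end

section
/- Let N ≥ 3, and let w : (0, r₀) → ℝ be continuous and negative, such that r^{2N-2} w(r)² is nondecreasing in r and ∫_{r/2}^{r} ds/w(s)² ≤ K r^{N + 2√(N-1) - 1} for all r ∈ (0, r₀), for some K > 0. Then |w(r)| ≥ M₁ r^{-N/2 - √(N-1) + 1} for all r ∈ (0, r₀), where M₁ = ((1 - 2^{1-2N})/((2N-1)K))^{1/2}. -/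
open Set intervalIntegral

theorem stmt_15 (N : ℕ) (hN : 3 ≤ N) (r₀ K : ℝ) (hr₀ : 0 < r₀) (hK : 0 < K)
    (w : ℝ → ℝ) (hw : ContinuousOn w (Ioo (0 : ℝ) r₀))
    (hneg : ∀ r ∈ Ioo (0 : ℝ) r₀, w r < 0)
    (hmono : MonotoneOn (fun r : ℝ => r ^ (2 * (N : ℝ) - 2) * (w r) ^ 2)
      (Ioo (0 : ℝ) r₀))
    (hint : ∀ r ∈ Ioo (0 : ℝ) r₀,
      (∫ s in (r / 2)..r, 1 / (w s) ^ 2)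
        ≤ K * r ^ ((N : ℝ) + 2 * Real.sqrt ((N : ℝ) - 1) - 1)) :
    ∀ r ∈ Ioo (0 : ℝ) r₀,
      Real.sqrt ((1 - (2 : ℝ) ^ (1 - 2 * (N : ℝ))) / ((2 * (N : ℝ) - 1) * K)) *
          r ^ (-(N : ℝ) / 2 - Real.sqrt ((N : ℝ) - 1) + 1)
        ≤ |w r| := by
  intro r hr
  obtain ⟨hr0, hrr₀⟩ := hr
  have hN3 : (3 : ℝ) ≤ (N : ℝ) := by exact_mod_cast hN
  set p : ℝ := 2 * (N : ℝ) - 2 with hp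
  set q : ℝ := (N : ℝ) + 2 * Real.sqrt ((N : ℝ) - 1) - 1 with hq
  set e : ℝ := -(N : ℝ) / 2 - Real.sqrt ((N : ℝ) - 1) + 1 with he
  have hp4 : (4 : ℝ) ≤ p := by rw [hp]; linarith
  have hr2 : 0 < r / 2 := by linarith
  have hsub : Icc (r / 2) r ⊆ Ioo 0 r₀ := fun x hx =>
    ⟨lt_of_lt_of_le hr2 hx.1, lt_of_le_of_lt hx.2 hrr₀⟩
  have hwr : w r < 0 := hneg r ⟨hr0, hrr₀⟩
  have hwr2 : 0 < (w r) ^ 2 := by nlinarith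
  have hrp : 0 < r ^ p := Real.rpow_pos_of_pos hr0 p
  have hrq : 0 < r ^ q := Real.rpow_pos_of_pos hr0 q
  -- pointwise bound
  have hbound : ∀ s ∈ Icc (r / 2) r,
      s ^ p / (r ^ p * (w r) ^ 2) ≤ 1 / (w s) ^ 2 := by
    intro s hs
    have hs0 : 0 < s := lt_of_lt_of_le hr2 hs.1
    have hws : w s < 0 := hneg s (hsub hs)
    have hws2 : 0 < (w s) ^ 2 := by nlinarith
    have hsp : 0 < s ^ p := Real.rpow_pos_of_pos hs0 p
    have hmle : s ^ p * (w s) ^ 2 ≤ r ^ p * (w r) ^ 2 :=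
      hmono (hsub hs) ⟨hr0, hrr₀⟩ hs.2
    rw [div_le_div_iff₀ (by positivity) hws2]
    nlinarith
  -- integrability
  have huIcc : uIcc (r / 2) r = Icc (r / 2) r := uIcc_of_le (by linarith)
  have hcw : ContinuousOn (fun s => 1 / (w s) ^ 2) (Icc (r / 2) r) := by
    apply ContinuousOn.div continuousOn_const ((hw.mono hsub).pow 2)
    intro x hx
    exact pow_ne_zero 2 (hneg x (hsub hx)).ne
  have hint1 : IntervalIntegrable (fun s => 1 / (w s) ^ 2) MeasureTheory.volume (r / 2) r := by
    apply ContinuousOn.intervalIntegrable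
    rw [huIcc]; exact hcw
  have hcg : ContinuousOn (fun s : ℝ => s ^ p) (Icc (r / 2) r) := fun x hx =>
    (Real.continuousAt_rpow_const x p (Or.inl (lt_of_lt_of_le hr2 hx.1).ne')).continuousWithinAt
  have hint2 : IntervalIntegrable (fun s : ℝ => s ^ p / (r ^ p * (w r) ^ 2))
      MeasureTheory.volume (r / 2) r := by
    apply ContinuousOn.intervalIntegrable
    rw [huIcc]; exact hcg.div_const _
  have hIle : (∫ s in (r / 2)..r, s ^ p / (r ^ p * (w r) ^ 2))
      ≤ ∫ s in (r / 2)..r, 1 / (w s) ^ 2 :=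
    intervalIntegral.integral_mono_on (by linarith) hint2 hint1 hbound
  have hcalc : (∫ s in (r / 2)..r, s ^ p / (r ^ p * (w r) ^ 2))
      = (r ^ (p + 1) - (r / 2) ^ (p + 1)) / ((p + 1) * (r ^ p * (w r) ^ 2)) := by
    rw [intervalIntegral.integral_div, integral_rpow (Or.inl (by linarith : (-1 : ℝ) < p))]
    rw [div_div]
  have h2 : ((r / 2) : ℝ) ^ (p + 1) = r ^ (p + 1) * 2 ^ (1 - 2 * (N : ℝ)) := by
    rw [Real.div_rpow hr0.le (by norm_num : (0 : ℝ) ≤ 2),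
      show (1 - 2 * (N : ℝ)) = -(p + 1) by rw [hp]; ring,
      Real.rpow_neg (by norm_num : (0 : ℝ) ≤ 2), div_eq_mul_inv]
  have hr1 : r ^ (p + 1) = r ^ p * r := by rw [Real.rpow_add hr0, Real.rpow_one]
  have hmain : (r ^ (p + 1) - (r / 2) ^ (p + 1)) / ((p + 1) * (r ^ p * (w r) ^ 2))
      ≤ K * r ^ q := hcalc ▸ (hIle.trans (hint r ⟨hr0, hrr₀⟩))
  rw [div_le_iff₀ (by positivity), h2, hr1] at hmain
  -- hmain : r^p*r - r^p*r*2^(1-2N) ≤ K*r^q*((p+1)*(r^p*(w r)^2))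
  have key : (1 - (2 : ℝ) ^ (1 - 2 * (N : ℝ))) * r ≤ (p + 1) * K * r ^ q * (w r) ^ 2 := by
    have h' : r ^ p * ((1 - (2 : ℝ) ^ (1 - 2 * (N : ℝ))) * r)
        ≤ r ^ p * ((p + 1) * K * r ^ q * (w r) ^ 2) := by nlinarith [hmain]
    exact le_of_mul_le_mul_left h' hrp
  have hc : 0 < 1 - (2 : ℝ) ^ (1 - 2 * (N : ℝ)) := by
    have : (2 : ℝ) ^ (1 - 2 * (N : ℝ)) < 1 :=
      Real.rpow_lt_one_of_one_lt_of_neg (by norm_num) (by linarith)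
    linarith
  have hD : 0 < (2 * (N : ℝ) - 1) * K := by
    have : (0 : ℝ) < 2 * (N : ℝ) - 1 := by linarith
    positivity
  have hp1 : p + 1 = 2 * (N : ℝ) - 1 := by rw [hp]; ring
  have h3 : r ^ (2 * e) * r ^ q = r := by
    rw [← Real.rpow_add hr0, show 2 * e + q = 1 by rw [he, hq]; ring, Real.rpow_one]
  have hq2 : (1 - (2 : ℝ) ^ (1 - 2 * (N : ℝ))) / ((2 * (N : ℝ) - 1) * K) * r ^ (2 * e)
      ≤ (w r) ^ 2 := by
    rw [div_mul_eq_mul_div, div_le_iff₀ hD]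
    have hmul : ((1 - (2 : ℝ) ^ (1 - 2 * (N : ℝ))) * r ^ (2 * e)) * r ^ q
        ≤ ((w r) ^ 2 * ((2 * (N : ℝ) - 1) * K)) * r ^ q := by
      calc ((1 - (2 : ℝ) ^ (1 - 2 * (N : ℝ))) * r ^ (2 * e)) * r ^ q
          = (1 - (2 : ℝ) ^ (1 - 2 * (N : ℝ))) * (r ^ (2 * e) * r ^ q) := by ring
        _ = (1 - (2 : ℝ) ^ (1 - 2 * (N : ℝ))) * r := by rw [h3]
        _ ≤ (p + 1) * K * r ^ q * (w r) ^ 2 := key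
        _ = ((w r) ^ 2 * ((2 * (N : ℝ) - 1) * K)) * r ^ q := by rw [hp1]; ring
    exact le_of_mul_le_mul_right hmul hrq
  have hre : Real.sqrt (r ^ (2 * e)) = r ^ e := by
    rw [show r ^ (2 * e) = (r ^ e) ^ 2 by
      rw [show (2 * e) = e * 2 by ring, Real.rpow_mul hr0.le, Real.rpow_two]]
    exact Real.sqrt_sq (Real.rpow_nonneg hr0.le e)
  have hcD : 0 ≤ (1 - (2 : ℝ) ^ (1 - 2 * (N : ℝ))) / ((2 * (N : ℝ) - 1) * K) :=
    le_of_lt (div_pos hc hD)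
  calc Real.sqrt ((1 - (2 : ℝ) ^ (1 - 2 * (N : ℝ))) / ((2 * (N : ℝ) - 1) * K)) * r ^ e
      = Real.sqrt ((1 - (2 : ℝ) ^ (1 - 2 * (N : ℝ))) / ((2 * (N : ℝ) - 1) * K)) *
        Real.sqrt (r ^ (2 * e)) := by rw [hre]
    _ = Real.sqrt ((1 - (2 : ℝ) ^ (1 - 2 * (N : ℝ))) / ((2 * (N : ℝ) - 1) * K) * r ^ (2 * e)) :=
        (Real.sqrt_mul hcD _).symm
    _ ≤ Real.sqrt ((w r) ^ 2) := Real.sqrt_le_sqrt hq2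
    _ = |w r| := Real.sqrt_sq_eq_abs _
end

section
/- Let N ≥ 3 and p > 1, and define u(r) = r^{-2/(p-1)} - 1 on (0,1]. Then u, with f(s) = (2(Np - 2p - N)/(p-1)²)(1+s)^p, satisfies: u ∈ C²((0,1]), u(1) = 0, -u'' - ((N-1)/r)u' = f(u) on (0,1], and the conditions ∫₀¹ r^{N-1}|f(u(r))| dr < ∞ and lim_{r→0} r^{N-1} u_r(r) = 0 hold if and only if p > N/(N-2). -/
open Set MeasureTheory Filter Topology

theorem stmt_19 (N : ℕ) (hN : 3 ≤ N) (p : ℝ) (hp : 1 < p)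
    (u : ℝ → ℝ) (hu : u = fun r : ℝ => r ^ (-2 / (p - 1)) - 1)
    (f : ℝ → ℝ)
    (hf : f = fun s : ℝ =>
      (2 * ((N : ℝ) * p - 2 * p - (N : ℝ)) / (p - 1) ^ 2) * (1 + s) ^ p) :
    ContDiffOn ℝ 2 u (Ioc (0 : ℝ) 1) ∧
    u 1 = 0 ∧
    (∀ r ∈ Ioc (0 : ℝ) 1,
      -(deriv (deriv u) r) - ((N : ℝ) - 1) / r * deriv u r = f (u r)) ∧
    ((IntegrableOn (fun r : ℝ => r ^ ((N : ℝ) - 1) * |f (u r)|) (Ioc (0 : ℝ) 1) ∧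
      Tendsto (fun r : ℝ => r ^ ((N : ℝ) - 1) * deriv u r) (𝓝[>] (0 : ℝ)) (𝓝 0))
      ↔ (N : ℝ) / ((N : ℝ) - 2) < p) := by
  have hp1 : (0:ℝ) < p - 1 := by linarith
  have hN3 : (3:ℝ) ≤ (N:ℝ) := by exact_mod_cast hN
  have hN2 : (0:ℝ) < (N:ℝ) - 2 := by linarith
  set a : ℝ := -2 / (p - 1) with ha
  have ha_neg : a < 0 := div_neg_of_neg_of_pos (by norm_num) hp1
  have hap : a * p = a - 2 := by
    rw [ha]; field_simp; ring
  set e : ℝ := (N:ℝ) - 2 + a with he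
  -- derivative formulas
  have hderiv : ∀ r : ℝ, 0 < r → HasDerivAt u (a * r ^ (a - 1)) r := by
    intro r hr
    rw [hu]
    simpa using (Real.hasDerivAt_rpow_const (p := a) (Or.inl hr.ne')).sub_const 1
  have hderiv_eq : ∀ r : ℝ, 0 < r → deriv u r = a * r ^ (a - 1) :=
    fun r hr => (hderiv r hr).deriv
  have hderiv2 : ∀ r : ℝ, 0 < r → deriv (deriv u) r = a * ((a - 1) * r ^ (a - 2)) := by
    intro r hr
    have hev : deriv u =ᶠ[𝓝 r] fun s => a * s ^ (a - 1) :=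
      eventually_of_mem (Ioi_mem_nhds hr) (fun s hs => hderiv_eq s hs)
    rw [hev.deriv_eq]
    have h1 : HasDerivAt (fun s : ℝ => a * s ^ (a - 1)) (a * ((a - 1) * r ^ (a - 1 - 1))) r :=
      (Real.hasDerivAt_rpow_const (p := a - 1) (Or.inl hr.ne')).const_mul a
    rw [h1.deriv, show a - 1 - 1 = a - 2 from by ring]
  -- part 1: smoothness
  have hcd : ContDiffOn ℝ 2 u (Ioc (0 : ℝ) 1) := by
    rw [hu]
    intro r hr
    exact ((Real.contDiffAt_rpow_const_of_ne (p := a) hr.1.ne').sub contDiffAt_const).contDiffWithinAt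
  -- part 2
  have hu1 : u 1 = 0 := by rw [hu]; simp
  -- part 3: the ODE
  have hode : ∀ r ∈ Ioc (0 : ℝ) 1,
      -(deriv (deriv u) r) - ((N : ℝ) - 1) / r * deriv u r = f (u r) := by
    intro r hr
    obtain ⟨hr0, hr1⟩ := hr
    rw [hderiv2 r hr0, hderiv_eq r hr0, hf, hu]
    simp only
    have h1 : (1 : ℝ) + (r ^ a - 1) = r ^ a := by ring
    rw [h1, ← Real.rpow_mul hr0.le, hap,
      show a - 1 = (a - 2) + 1 from by ring, Real.rpow_add_one hr0.ne']
    rw [ha]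
    field_simp
    ring
  refine ⟨hcd, hu1, hode, ?_⟩
  -- algebraic equivalence of the exponent condition
  have hmul : e * (p - 1) = p * ((N:ℝ) - 2) - (N:ℝ) := by
    rw [he, ha]; field_simp; ring
  have key : ((N:ℝ) / ((N:ℝ) - 2) < p) ↔ 0 < e := by
    rw [div_lt_iff₀ hN2]
    constructor
    · intro h; nlinarith [hmul]
    · intro h; nlinarith [hmul, mul_pos h hp1]
  have hg : ∀ r : ℝ, 0 < r → r ^ ((N:ℝ) - 1) * deriv u r = a * r ^ e := by
    intro r hr
    rw [hderiv_eq r hr, he,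
      show ((N:ℝ) - 2 + a) = ((N:ℝ) - 1) + (a - 1) from by ring, Real.rpow_add hr]
    ring
  rw [key]
  constructor
  · rintro ⟨-, ht⟩
    by_contra hle
    push_neg at hle
    have haabs : 0 < |a| := abs_pos.mpr ha_neg.ne
    have hev1 : ∀ᶠ r in 𝓝[>] (0:ℝ), |r ^ ((N:ℝ) - 1) * deriv u r| < |a| := by
      rw [Metric.tendsto_nhds] at ht
      simpa only [Real.dist_eq, sub_zero] using ht |a| haabs
    have hev2 : ∀ᶠ r in 𝓝[>] (0:ℝ), r ∈ Ioo (0:ℝ) 1 :=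
      eventually_of_mem (Ioo_mem_nhdsGT_of_mem ⟨le_refl _, zero_lt_one⟩) (fun x hx => hx)
    obtain ⟨r, h1, hr0, hr1⟩ := (hev1.and hev2).exists
    rw [hg r hr0, abs_mul, abs_of_pos (Real.rpow_pos_of_pos hr0 e)] at h1
    have hge : (1:ℝ) ≤ r ^ e := by
      have := Real.rpow_le_rpow_of_exponent_ge hr0 hr1.le hle
      rwa [Real.rpow_zero] at this
    nlinarith
  · intro hepos
    constructor
    · -- integrability
      set C : ℝ := 2 * ((N : ℝ) * p - 2 * p - (N : ℝ)) / (p - 1) ^ 2 with hC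
      have h1 : IntervalIntegrable (fun x : ℝ => x ^ (e - 1)) volume 0 1 :=
        intervalIntegral.intervalIntegrable_rpow' (by linarith)
      have h2 := (intervalIntegrable_iff_integrableOn_Ioc_of_le
        (by norm_num : (0:ℝ) ≤ 1)).mp h1
      have hint : IntegrableOn (fun r : ℝ => |C| * r ^ (e - 1)) (Ioc (0:ℝ) 1) :=
        h2.const_mul _
      refine hint.congr_fun ?_ measurableSet_Ioc
      intro r hr
      obtain ⟨hr0, hr1⟩ := hr
      rw [hf, hu]
      simp only
      rw [show (1:ℝ) + (r ^ a - 1) = r ^ a from by ring, ← Real.rpow_mul hr0.le, hap,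
        abs_mul, abs_of_nonneg (Real.rpow_nonneg hr0.le _),
        show e - 1 = ((N:ℝ) - 1) + (a - 2) from by rw [he]; ring, Real.rpow_add hr0]
      ring
    · -- tendsto
      have hc : ContinuousAt (fun x : ℝ => x ^ e) 0 :=
        Real.continuousAt_rpow_const 0 e (Or.inr hepos.le)
      have h0 : Tendsto (fun r : ℝ => r ^ e) (𝓝[>] (0:ℝ)) (𝓝 0) := by
        have h := hc.tendsto.mono_left (nhdsWithin_le_nhds (s := Ioi (0:ℝ)))
        simpa [Real.zero_rpow hepos.ne'] using h
      have h1 : Tendsto (fun r : ℝ => a * r ^ e) (𝓝[>] (0:ℝ)) (𝓝 0) := by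
        simpa using h0.const_mul a
      apply Tendsto.congr' _ h1
      filter_upwards [self_mem_nhdsWithin] with r hr
      exact (hg r hr).symm
end
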